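/- arXiv:1212.0935 — 4 statements merged into one kernel-verified Lean document; each statement's English description precedes it below -/
import Mathlib

section
/- Let G be a finite directed acyclic graph satisfying the ant-conservation condition with sources s_1, …, s_k and destinations t_1, …, t_k. Then the edge set of G can be partitioned into the edge sets of k pairwise edge-disjoint directed paths P_1, …, P_k, each going from a source to a destination, such that each source s_i is the starting vertex of exactly outdeg(s_i) of the paths and each destination t_j is the ending vertex of exactly indeg(t_j) of the paths. In particular, the greedy algorithm, which repeatedly removes a source-to-destination path, always terminates with k edge-disjoint paths. -/
/-! Common setup: finite directed graphs as finsets of ordered pairs of vertices. -/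

/-- The list of edges of a path given as a list of vertices. -/
def pathEdges {V : Type} (p : List V) : List (V × V) := p.zip p.tail

/-- `p` is a directed path in the graph with edge set `E`: a nonempty sequence of
pairwise-distinct vertices in which consecutive vertices are joined by edges of `E`. -/
def IsPath {V : Type} [DecidableEq V] (E : Finset (V × V)) (p : List V) : Prop :=
  p ≠ [] ∧ p.Nodup ∧ p.Chain' (fun u v => (u, v) ∈ E)

/-- `p` is a directed path in `E` from `a` to `b`. -/
def IsPathFrom {V : Type} [DecidableEq V] (E : Finset (V × V)) (p : List V) (a b : V) : Prop :=
  IsPath E p ∧ p.head? = some a ∧ p.getLast? = some b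

/-- The indegree of vertex `v`. -/
def indeg {V : Type} [DecidableEq V] (E : Finset (V × V)) (v : V) : ℕ :=
  (E.filter (fun e => e.2 = v)).card

/-- The outdegree of vertex `v`. -/
def outdeg {V : Type} [DecidableEq V] (E : Finset (V × V)) (v : V) : ℕ :=
  (E.filter (fun e => e.1 = v)).card

/-- A directed cycle: a sequence `v₀, v₁, …, v_ℓ = v₀` with `ℓ ≥ 1` and all
`(v_j, v_{j+1})` edges. -/
def IsCycle {V : Type} [DecidableEq V] (E : Finset (V × V)) (p : List V) : Prop :=
  2 ≤ p.length ∧ p.Chain' (fun u v => (u, v) ∈ E) ∧ p.head? = p.getLast?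

/-- The graph is acyclic: it contains no directed cycle. -/
def Acyclic {V : Type} [DecidableEq V] (E : Finset (V × V)) : Prop :=
  ∀ p : List V, ¬ IsCycle E p

/-- The ant-conservation condition for a directed graph with edge set `E`, with `k`
distinguished sources `s 1, …, s k` (exactly the vertices of indegree 0) and `k`
distinguished destinations `t 1, …, t k` (exactly the vertices of outdegree 0):
`Σᵢ outdeg (s i) = Σᵢ indeg (t i) = k`, and `indeg v = outdeg v` for every
intermediate vertex `v`. -/
structure AntConservation {V : Type} [DecidableEq V]
    (E : Finset (V × V)) (k : ℕ) (s t : Fin k → V) : Prop where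
  s_inj : Function.Injective s
  t_inj : Function.Injective t
  sources : ∀ v, indeg E v = 0 ↔ ∃ i, s i = v
  dests : ∀ v, outdeg E v = 0 ↔ ∃ i, t i = v
  out_sum : ∑ i, outdeg E (s i) = k
  in_sum : ∑ i, indeg E (t i) = k
  conserve : ∀ v, (¬ ∃ i, s i = v) → (¬ ∃ i, t i = v) → indeg E v = outdeg E v

/-- The paths `P 1, …, P k` are pairwise edge-disjoint. -/
def EdgeDisjoint {V : Type} {k : ℕ} (P : Fin k → List V) : Prop :=
  ∀ i j, i ≠ j → ∀ e, e ∈ pathEdges (P i) → e ∉ pathEdges (P j)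

/-- The total weight of the edges of a path under an edge-weight function. -/
def listWeight {V : Type} (wt : V × V → ℕ) (p : List V) : ℕ :=
  ((pathEdges p).map wt).sum

/-
A longest path in a finite acyclic graph cannot be extended, so it runs from a vertex of
indegree 0 to one of outdegree 0; when flow is conserved off the sources and destinations,
these endpoints must be a source and a destination. Deleting the path's edges keeps flow
conserved at every other vertex, so induction on the number of edges splits `E` into
source-to-destination paths. Counting the occurrences of a vertex `v` on all the paths in two
ways gives `indeg v + #(paths starting at v) = outdeg v + #(paths ending at v)`, which yields
the multiplicities at the sources and destinations; summing over the sources shows that there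
are `Σ outdeg (s i) = k` paths.
-/

open Finset

namespace AntPaths

section PathEdges

variable {V : Type}

lemma pathEdges_cons_cons (x y : V) (l : List V) :
    pathEdges (x :: y :: l) = (x, y) :: pathEdges (y :: l) := rfl

lemma isChain_iff_forall_mem_pathEdges {R : V → V → Prop} :
    ∀ {p : List V}, p.IsChain R ↔ ∀ e ∈ pathEdges p, R e.1 e.2
  | [] | [_] => by simp [pathEdges]
  | x :: y :: l => by
    rw [pathEdges_cons_cons, List.isChain_cons_cons, isChain_iff_forall_mem_pathEdges,
      List.forall_mem_cons]

lemma map_snd_pathEdges (p : List V) : (pathEdges p).map Prod.snd = p.tail :=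
  List.map_snd_zip (by simp)

lemma map_fst_pathEdges : ∀ p : List V, (pathEdges p).map Prod.fst = p.dropLast
  | [] | [_] => rfl
  | x :: y :: l => congrArg (x :: ·) (map_fst_pathEdges (y :: l))

lemma nodup_pathEdges {p : List V} (hp : p.Nodup) : (pathEdges p).Nodup :=
  List.Nodup.of_map Prod.snd (map_snd_pathEdges p ▸ hp.sublist (List.tail_sublist p))

lemma pathEdges_ne_nil {p : List V} (hp : 2 ≤ p.length) : pathEdges p ≠ [] := by
  match p, hp with
  | _ :: _ :: _, _ => exact List.cons_ne_nil _ _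

lemma head_mem_dropLast {p : List V} (hp : 2 ≤ p.length) {x : V} (hx : p.head? = some x) :
    x ∈ p.dropLast := by
  match p, hp with
  | _ :: _ :: _, _ => simp_all

lemma getLast_mem_tail {p : List V} (hp : 2 ≤ p.length) {y : V} (hy : p.getLast? = some y) :
    y ∈ p.tail := by
  match p, hp with
  | _ :: _ :: _, _ => exact List.mem_of_mem_getLast? (List.getLast?_cons_cons ▸ hy)

lemma edgeDisjoint_of_val_eq_sum {F : Finset (V × V)} {n : ℕ} {P : Fin n → List V}
    (hF : F.val = ∑ i, (pathEdges (P i) : Multiset (V × V))) : EdgeDisjoint P := by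
  intro i j hij e hi hj
  have hnd := F.nodup
  rw [hF, ← add_sum_erase _ _ (mem_univ i)] at hnd
  exact Multiset.disjoint_left.1 (Multiset.disjoint_of_nodup_add hnd) hi
    (Multiset.mem_sum.2 ⟨j, mem_erase.2 ⟨hij.symm, mem_univ j⟩, hj⟩)

variable [DecidableEq V]

lemma countP_snd_pathEdges (p : List V) (v : V) :
    (pathEdges p).countP (fun e => e.2 = v) = p.tail.count v := by
  rw [← map_snd_pathEdges, List.count, List.countP_map]
  rfl

lemma countP_fst_pathEdges (p : List V) (v : V) :
    (pathEdges p).countP (fun e => e.1 = v) = p.dropLast.count v := by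
  rw [← map_fst_pathEdges, List.count, List.countP_map]
  rfl

lemma count_eq_count_tail_add {p : List V} (hp : p ≠ []) (v : V) :
    p.count v = p.tail.count v + if p.head? = some v then 1 else 0 := by
  obtain ⟨x, l, rfl⟩ := List.exists_cons_of_ne_nil hp
  simp [List.count_cons]

lemma count_eq_count_dropLast_add {p : List V} (hp : p ≠ []) (v : V) :
    p.count v = p.dropLast.count v + if p.getLast? = some v then 1 else 0 := by
  conv_lhs => rw [← List.dropLast_concat_getLast hp]
  simp [List.count_append, List.getLast?_eq_some_getLast hp, List.count_singleton]

end PathEdges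

lemma sum_card_filter_eq_card {ι κ β : Type*} [Fintype ι] [Fintype κ] [DecidableEq β]
    {f : κ → β} (hf : Function.Injective f) {g : ι → β} (hg : ∀ i, ∃ a, g i = f a) :
    ∑ a, #{i | g i = f a} = Fintype.card ι := by
  simp only [card_filter]
  rw [sum_comm, Fintype.card_eq_sum_ones]
  refine sum_congr rfl fun i _ => ?_
  obtain ⟨a, ha⟩ := hg i
  rw [sum_eq_single_of_mem a (mem_univ a) fun b _ hb => if_neg (ha ▸ hf.ne hb.symm), if_pos ha]

section Graphs

variable {V : Type} [DecidableEq V]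

lemma indeg_eq_countP (F : Finset (V × V)) (v : V) :
    indeg F v = F.val.countP (fun e => e.2 = v) := by
  rw [indeg, Multiset.countP_eq_card_filter]
  rfl

lemma outdeg_eq_countP (F : Finset (V × V)) (v : V) :
    outdeg F v = F.val.countP (fun e => e.1 = v) := by
  rw [outdeg, Multiset.countP_eq_card_filter]
  rfl

lemma exists_mem_of_indeg_ne_zero {F : Finset (V × V)} {v : V} (hv : indeg F v ≠ 0) :
    ∃ u, (u, v) ∈ F := by
  obtain ⟨⟨u, _⟩, he⟩ := Finset.card_ne_zero.1 hv
  obtain ⟨hF, rfl⟩ := Finset.mem_filter.1 he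
  exact ⟨u, hF⟩

lemma exists_mem_of_outdeg_ne_zero {F : Finset (V × V)} {v : V} (hv : outdeg F v ≠ 0) :
    ∃ w, (v, w) ∈ F := by
  obtain ⟨⟨_, w⟩, he⟩ := Finset.card_ne_zero.1 hv
  obtain ⟨hF, rfl⟩ := Finset.mem_filter.1 he
  exact ⟨w, hF⟩

lemma val_eq_pathEdges_add_sdiff {F : Finset (V × V)} {p : List V} (hp : p.Nodup)
    (hpF : ∀ e ∈ pathEdges p, e ∈ F) :
    F.val = ↑(pathEdges p) + (F \ (pathEdges p).toFinset).val := by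
  have hval : (pathEdges p).toFinset.val = ↑(pathEdges p) := by
    rw [List.toFinset_val, List.dedup_eq_self.2 (nodup_pathEdges hp)]
  rw [Finset.sdiff_val, hval, add_tsub_cancel_of_le]
  rw [← hval, Finset.val_le_iff]
  exact fun e he => hpF e (List.mem_toFinset.1 he)

lemma IsPathFrom.mono {F G : Finset (V × V)} (hFG : F ⊆ G) {p : List V} {a b : V}
    (hp : IsPathFrom F p a b) : IsPathFrom G p a b :=
  ⟨⟨hp.1.1, hp.1.2.1, hp.1.2.2.imp fun _ _ h => hFG h⟩, hp.2⟩

lemma Acyclic.mono {F G : Finset (V × V)} (hFG : F ⊆ G) (hG : Acyclic G) : Acyclic F :=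
  fun p hp => hG p ⟨hp.1, hp.2.1.imp fun _ _ h => hFG h, hp.2.2⟩

-- A repeated vertex `x` would close the cycle `x :: l₁ ++ [x]` formed by a prefix of the walk.
lemma Acyclic.nodup {F : Finset (V × V)} (hF : Acyclic F) :
    ∀ {p : List V}, p.IsChain (fun u v => (u, v) ∈ F) → p.Nodup
  | [], _ => List.nodup_nil
  | x :: l, hp => by
    refine List.nodup_cons.2 ⟨fun hx => ?_, Acyclic.nodup hF hp.tail⟩
    obtain ⟨l₁, l₂, rfl⟩ := List.append_of_mem hx
    apply hF (x :: l₁ ++ [x])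
    refine ⟨by simp, ?_, by rw [List.getLast?_concat]; rfl⟩
    exact List.IsChain.left_of_append (l₂ := l₂) (by simpa using hp)

lemma Acyclic.exists_longest_chain [Fintype V] {F : Finset (V × V)} (hF : Acyclic F)
    (hne : F.Nonempty) :
    ∃ p : List V, p.IsChain (fun u v => (u, v) ∈ F) ∧ 2 ≤ p.length ∧
      ∀ q : List V, q.IsChain (fun u v => (u, v) ∈ F) → q.length ≤ p.length := by
  let lengths : Set ℕ :=
    {n | ∃ q : List V, q.IsChain (fun u v => (u, v) ∈ F) ∧ q.length = n}
  have hbdd : BddAbove lengths := ⟨Fintype.card V, by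
    rintro _ ⟨q, hq, rfl⟩
    exact (Acyclic.nodup hF hq).length_le_card⟩
  obtain ⟨⟨x, y⟩, hxy⟩ := hne
  have h2 : 2 ∈ lengths := ⟨[x, y], by simpa using hxy, rfl⟩
  obtain ⟨p, hp, hlen⟩ := Nat.sSup_mem ⟨2, h2⟩ hbdd
  exact ⟨p, hp, hlen ▸ le_csSup hbdd h2, fun q hq => hlen ▸ le_csSup hbdd ⟨q, hq, rfl⟩⟩

lemma Acyclic.exists_chain_source_sink [Fintype V] {F : Finset (V × V)} (hF : Acyclic F)
    (hne : F.Nonempty) :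
    ∃ p : List V, p.IsChain (fun u v => (u, v) ∈ F) ∧ 2 ≤ p.length ∧
      (∀ x ∈ p.head?, indeg F x = 0) ∧ ∀ y ∈ p.getLast?, outdeg F y = 0 := by
  obtain ⟨p, hp, hlen, hmax⟩ := Acyclic.exists_longest_chain hF hne
  refine ⟨p, hp, hlen, fun x hx => ?_, fun y hy => ?_⟩
  · by_contra hin
    obtain ⟨u, hu⟩ := exists_mem_of_indeg_ne_zero hin
    have := hmax (u :: p) (List.isChain_cons.2 ⟨fun x' hx' => by simp_all, hp⟩)
    simp at this
  · by_contra hout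
    obtain ⟨w, hw⟩ := exists_mem_of_outdeg_ne_zero hout
    have := hmax (p ++ [w]) (List.isChain_append.2 ⟨hp, by simp, fun y' hy' => by simp_all⟩)
    simp at this

def IsBalancedOff (F : Finset (V × V)) (A B : Set V) : Prop :=
  ∀ v, v ∉ A → v ∉ B → indeg F v = outdeg F v

section PathRemoval

variable {F G : Finset (V × V)} {p : List V}

lemma indeg_eq_count_tail_add (hFG : F.val = ↑(pathEdges p) + G.val) (v : V) :
    indeg F v = p.tail.count v + indeg G v := by
  simp only [indeg_eq_countP, hFG, Multiset.countP_add, Multiset.coe_countP,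
    countP_snd_pathEdges]

lemma outdeg_eq_count_dropLast_add (hFG : F.val = ↑(pathEdges p) + G.val) (v : V) :
    outdeg F v = p.dropLast.count v + outdeg G v := by
  simp only [outdeg_eq_countP, hFG, Multiset.countP_add, Multiset.coe_countP,
    countP_fst_pathEdges]

lemma mem_of_head_of_isBalancedOff {A B : Set V} (hFG : F.val = ↑(pathEdges p) + G.val)
    (hbal : IsBalancedOff F A B) (hB : ∀ b ∈ B, outdeg F b = 0) (hp : 2 ≤ p.length)
    {a : V} (ha : p.head? = some a) (ha0 : indeg F a = 0) : a ∈ A := by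
  have ha_out : outdeg F a ≠ 0 := by
    have := List.count_pos_iff.2 (head_mem_dropLast hp ha)
    rw [outdeg_eq_count_dropLast_add hFG]
    omega
  by_contra haA
  exact ha_out ((hbal a haA fun haB => ha_out (hB a haB)).symm.trans ha0)

lemma mem_of_getLast_of_isBalancedOff {A B : Set V} (hFG : F.val = ↑(pathEdges p) + G.val)
    (hbal : IsBalancedOff F A B) (hA : ∀ a ∈ A, indeg F a = 0) (hp : 2 ≤ p.length)
    {b : V} (hb : p.getLast? = some b) (hb0 : outdeg F b = 0) : b ∈ B := by
  have hb_in : indeg F b ≠ 0 := by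
    have := List.count_pos_iff.2 (getLast_mem_tail hp hb)
    rw [indeg_eq_count_tail_add hFG]
    omega
  by_contra hbB
  exact hb_in ((hbal b (fun hbA => hb_in (hA b hbA)) hbB).trans hb0)

-- An inner vertex of `p` loses one incoming and one outgoing edge.
lemma IsBalancedOff.of_val_eq_pathEdges_add {A B : Set V} (hbal : IsBalancedOff F A B)
    (hFG : F.val = ↑(pathEdges p) + G.val) (hp : p ≠ []) {a b : V} (ha : p.head? = some a)
    (haA : a ∈ A) (hb : p.getLast? = some b) (hbB : b ∈ B) : IsBalancedOff G A B := by
  intro v hvA hvB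
  have hva : p.head? ≠ some v := by
    rw [ha]
    exact fun h => hvA (Option.some_inj.1 h ▸ haA)
  have hvb : p.getLast? ≠ some v := by
    rw [hb]
    exact fun h => hvB (Option.some_inj.1 h ▸ hbB)
  have htail := count_eq_count_tail_add hp v
  have hdropLast := count_eq_count_dropLast_add hp v
  rw [if_neg hva] at htail
  rw [if_neg hvb] at hdropLast
  have := indeg_eq_count_tail_add hFG v
  have := outdeg_eq_count_dropLast_add hFG v
  have := hbal v hvA hvB
  omega

end PathRemoval

theorem exists_pathDecomposition [Fintype V] (A B : Set V) (F : Finset (V × V))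
    (hF : Acyclic F) (hA : ∀ a ∈ A, indeg F a = 0) (hB : ∀ b ∈ B, outdeg F b = 0)
    (hbal : IsBalancedOff F A B) :
    ∃ n, ∃ P : Fin n → List V,
      (∀ i, 2 ≤ (P i).length ∧ ∃ a ∈ A, ∃ b ∈ B, IsPathFrom F (P i) a b) ∧
      F.val = ∑ i, (pathEdges (P i) : Multiset (V × V)) := by
  induction F using Finset.strongInduction with
  | H F ih =>
  rcases F.eq_empty_or_nonempty with rfl | hne
  · exact ⟨0, Fin.elim0, fun i => i.elim0, by simp⟩
  obtain ⟨p, hch, hlen, hsrc, hsink⟩ := Acyclic.exists_chain_source_sink hF hne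
  have hp : p ≠ [] := List.ne_nil_of_length_pos (by omega)
  have hnd := Acyclic.nodup hF hch
  obtain ⟨a, ha⟩ : ∃ a, p.head? = some a := ⟨_, List.head?_eq_some_head hp⟩
  obtain ⟨b, hb⟩ : ∃ b, p.getLast? = some b := ⟨_, List.getLast?_eq_some_getLast hp⟩
  have hpF := isChain_iff_forall_mem_pathEdges.1 hch
  set F' := F \ (pathEdges p).toFinset
  have hsplit : F.val = ↑(pathEdges p) + F'.val := val_eq_pathEdges_add_sdiff hnd hpF
  have haA := mem_of_head_of_isBalancedOff hsplit hbal hB hlen ha (hsrc a ha)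
  have hbB := mem_of_getLast_of_isBalancedOff hsplit hbal hA hlen hb (hsink b hb)
  have hF' : F' ⊂ F := Finset.sdiff_ssubset (fun e he => hpF e (List.mem_toFinset.1 he))
    (List.toFinset_nonempty_iff _ |>.2 (pathEdges_ne_nil hlen))
  obtain ⟨n, P, hP, hsum⟩ := ih F' hF' (Acyclic.mono Finset.sdiff_subset hF)
    (fun a ha => by have := indeg_eq_count_tail_add hsplit a; have := hA a ha; omega)
    (fun b hb => by have := outdeg_eq_count_dropLast_add hsplit b; have := hB b hb; omega)
    (IsBalancedOff.of_val_eq_pathEdges_add hbal hsplit hp ha haA hb hbB)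
  refine ⟨n + 1, Fin.cons p P, Fin.forall_fin_succ.2 ⟨?_, fun i => ?_⟩, ?_⟩
  · exact ⟨hlen, a, haA, b, hbB, ⟨hp, hnd, hch⟩, ha, hb⟩
  · obtain ⟨hlen_i, a', ha', b', hb', hpath⟩ := hP i
    exact ⟨hlen_i, a', ha', b', hb', IsPathFrom.mono Finset.sdiff_subset hpath⟩
  · simp only [hsplit, hsum, Fin.sum_univ_succ, Fin.cons_zero, Fin.cons_succ]

section Counting

variable {ι : Type*} [Fintype ι] {P : ι → List V} {F : Finset (V × V)}

lemma indeg_eq_sum_count_tail (hF : F.val = ∑ i, (pathEdges (P i) : Multiset (V × V))) (v : V) :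
    indeg F v = ∑ i, (P i).tail.count v := by
  simp only [indeg_eq_countP, hF, ← Multiset.coe_countPAddMonoidHom, map_sum]
  simp [Multiset.countPAddMonoidHom, countP_snd_pathEdges]

lemma outdeg_eq_sum_count_dropLast (hF : F.val = ∑ i, (pathEdges (P i) : Multiset (V × V)))
    (v : V) : outdeg F v = ∑ i, (P i).dropLast.count v := by
  simp only [outdeg_eq_countP, hF, ← Multiset.coe_countPAddMonoidHom, map_sum]
  simp [Multiset.countPAddMonoidHom, countP_fst_pathEdges]

lemma indeg_add_card_filter_head (hP : ∀ i, P i ≠ [])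
    (hF : F.val = ∑ i, (pathEdges (P i) : Multiset (V × V))) (v : V) :
    indeg F v + #{i | (P i).head? = some v} = outdeg F v + #{i | (P i).getLast? = some v} := by
  rw [indeg_eq_sum_count_tail hF, outdeg_eq_sum_count_dropLast hF, card_filter, card_filter,
    ← sum_add_distrib, ← sum_add_distrib]
  exact sum_congr rfl fun i _ =>
    (count_eq_count_tail_add (hP i) v).symm.trans (count_eq_count_dropLast_add (hP i) v)

lemma card_filter_head_eq_outdeg (hP : ∀ i, 2 ≤ (P i).length)
    (hF : F.val = ∑ i, (pathEdges (P i) : Multiset (V × V))) {v : V} (hv : indeg F v = 0) :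
    #{i | (P i).head? = some v} = outdeg F v := by
  have hlast : #{i | (P i).getLast? = some v} = 0 := by
    rw [card_eq_zero, filter_eq_empty_iff]
    intro i _ hi
    have hcount := sum_eq_zero_iff.1 ((indeg_eq_sum_count_tail hF v).symm.trans hv) i (mem_univ i)
    exact (List.count_pos_iff.2 (getLast_mem_tail (hP i) hi)).ne' hcount
  have := indeg_add_card_filter_head
    (fun i => List.ne_nil_of_length_pos (by have := hP i; omega)) hF v
  omega

lemma card_filter_getLast_eq_indeg (hP : ∀ i, 2 ≤ (P i).length)
    (hF : F.val = ∑ i, (pathEdges (P i) : Multiset (V × V))) {v : V} (hv : outdeg F v = 0) :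
    #{i | (P i).getLast? = some v} = indeg F v := by
  have hhead : #{i | (P i).head? = some v} = 0 := by
    rw [card_eq_zero, filter_eq_empty_iff]
    intro i _ hi
    have hcount :=
      sum_eq_zero_iff.1 ((outdeg_eq_sum_count_dropLast hF v).symm.trans hv) i (mem_univ i)
    exact (List.count_pos_iff.2 (head_mem_dropLast (hP i) hi)).ne' hcount
  have := indeg_add_card_filter_head
    (fun i => List.ne_nil_of_length_pos (by have := hP i; omega)) hF v
  omega

end Counting

end Graphs

end AntPaths

open AntPaths in
/-- The edge set of a finite DAG satisfying the ant-conservation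
condition can be partitioned into the edge sets of `k` pairwise edge-disjoint
source-to-destination paths, with each source `s i` the starting vertex of exactly
`outdeg (s i)` of the paths and each destination `t j` the ending vertex of exactly
`indeg (t j)` of the paths. (In particular, the greedy algorithm always terminates
with `k` edge-disjoint paths.) -/
theorem stmt4 {V : Type} [Fintype V] [DecidableEq V] (E : Finset (V × V)) (k : ℕ)
    (s t : Fin k → V) (hacyc : Acyclic E) (hac : AntConservation E k s t) :
    ∃ P : Fin k → List V,
      (∀ i, ∃ a b, IsPathFrom E (P i) (s a) (t b)) ∧
      EdgeDisjoint P ∧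
      (∀ e ∈ E, ∃ i, e ∈ pathEdges (P i)) ∧
      (∀ a : Fin k,
        (Finset.univ.filter (fun i => (P i).head? = some (s a))).card = outdeg E (s a)) ∧
      (∀ b : Fin k,
        (Finset.univ.filter (fun i => (P i).getLast? = some (t b))).card = indeg E (t b)) := by
  obtain ⟨n, P, hP, hsum⟩ := exists_pathDecomposition (Set.range s) (Set.range t) E hacyc
    (fun _ hv => (hac.sources _).2 hv) (fun _ hv => (hac.dests _).2 hv) hac.conserve
  have hlen (i : Fin n) : 2 ≤ (P i).length := (hP i).1
  have hsrc (a : Fin k) : #{i | (P i).head? = some (s a)} = outdeg E (s a) :=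
    card_filter_head_eq_outdeg hlen hsum ((hac.sources _).2 ⟨a, rfl⟩)
  have hn : n = k := by
    have hheads (i : Fin n) : ∃ a, (P i).head? = some (s a) := by
      obtain ⟨-, -, ⟨a, rfl⟩, -, -, -, ha, -⟩ := hP i
      exact ⟨a, ha⟩
    rw [← Fintype.card_fin n, ← hac.out_sum,
      ← sum_card_filter_eq_card ((Option.some_injective V).comp hac.s_inj) hheads]
    exact Finset.sum_congr rfl fun a _ => hsrc a
  subst hn
  refine ⟨P, fun i => ?_, edgeDisjoint_of_val_eq_sum hsum, fun e he => ?_, hsrc,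
    fun b => card_filter_getLast_eq_indeg hlen hsum ((hac.dests _).2 ⟨b, rfl⟩)⟩
  · obtain ⟨-, -, ⟨a, rfl⟩, -, ⟨b, rfl⟩, hpath⟩ := hP i
    exact ⟨a, b, hpath⟩
  · obtain ⟨i, -, hi⟩ := Multiset.mem_sum.1 (hsum ▸ Finset.mem_def.1 he)
    exact ⟨i, hi⟩
end

section
/- Let G = (V, E) be a finite directed acyclic graph satisfying the ant-conservation condition with sources s_1, …, s_k and destinations t_1, …, t_k, let G' be the graph obtained by the tail construction, and let the weights w_e^i be defined from chosen paths R_i from s_i' to t_i'. If there exist k pairwise edge-disjoint directed paths Q_1, …, Q_k in G with Q_i from s_i to t_i, then there exist k pairwise edge-disjoint directed paths P_1, …, P_k in G' with P_i starting at s_i' and ending at t_i', whose total cost Σ_{i=1}^k Σ_{e ∈ P_i} w_e^i is at least k²·|V|. -/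
/-! ### The tail construction
`G'` lives on the vertex type `V ⊕ Fin k ⊕ (Fin k × Fin (k * |V|))`, where `Sum.inl v`
is an original vertex, `Sum.inr (Sum.inl i)` is the new source `sᵢ'`, and
`Sum.inr (Sum.inr (i, m))` is the `(m+1)`-st vertex `t_{i,m+1}` of the `i`-th tail
(so `tᵢ' = t_{i,k|V|}` is the tail vertex with index `m = k * |V| - 1`). -/

/-- Adjacency of the tail-construction graph `G'`: the edges of `G`, an edge `(sᵢ', sᵢ)`
for each `i`, an edge from `tᵢ` to the first vertex of the `i`-th tail, and the edges
along each tail path. -/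
def tailAdj {V : Type} [Fintype V] [DecidableEq V] {k : ℕ} (E : Finset (V × V))
    (s t : Fin k → V)
    (e : (V ⊕ Fin k ⊕ Fin k × Fin (k * Fintype.card V)) ×
         (V ⊕ Fin k ⊕ Fin k × Fin (k * Fintype.card V))) : Bool :=
  match e with
  | (Sum.inl u, Sum.inl v) => decide ((u, v) ∈ E)
  | (Sum.inr (Sum.inl i), Sum.inl v) => decide (v = s i)
  | (Sum.inl u, Sum.inr (Sum.inr (i, m))) => decide (u = t i) && decide ((m : ℕ) = 0)
  | (Sum.inr (Sum.inr (i, m)), Sum.inr (Sum.inr (j, m'))) =>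
      decide (i = j) && decide ((m' : ℕ) = (m : ℕ) + 1)
  | _ => false

/-- The edge set of the tail-construction graph `G'`. -/
def tailEdges {V : Type} [Fintype V] [DecidableEq V] {k : ℕ} (E : Finset (V × V))
    (s t : Fin k → V) :
    Finset ((V ⊕ Fin k ⊕ Fin k × Fin (k * Fintype.card V)) ×
            (V ⊕ Fin k ⊕ Fin k × Fin (k * Fintype.card V))) :=
  Finset.univ.filter (fun e => tailAdj E s t e = true)

/-- `z` is the last vertex `tᵢ' = t_{i, k|V|}` of the `i`-th tail. -/
def IsLastTail {V : Type} [Fintype V] {k : ℕ} (i : Fin k)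
    (z : V ⊕ Fin k ⊕ Fin k × Fin (k * Fintype.card V)) : Prop :=
  ∃ m : Fin (k * Fintype.card V), (m : ℕ) + 1 = k * Fintype.card V ∧
    z = Sum.inr (Sum.inr (i, m))

section PathEdges

variable {α β : Type}

theorem pathEdges_cons_cons (x y : α) (l : List α) :
    pathEdges (x :: y :: l) = (x, y) :: pathEdges (y :: l) := rfl

theorem fst_mem_of_mem_pathEdges {p : List α} {e : α × α} (h : e ∈ pathEdges p) : e.1 ∈ p :=
  (List.of_mem_zip h).1

theorem snd_mem_tail_of_mem_pathEdges {p : List α} {e : α × α} (h : e ∈ pathEdges p) :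
    e.2 ∈ p.tail :=
  (List.of_mem_zip h).2

theorem snd_mem_of_mem_pathEdges {p : List α} {e : α × α} (h : e ∈ pathEdges p) : e.2 ∈ p :=
  List.mem_of_mem_tail (snd_mem_tail_of_mem_pathEdges h)

theorem pathEdges_map (f : α → β) (l : List α) :
    pathEdges (l.map f) = (pathEdges l).map (Prod.map f f) := by
  rw [pathEdges, pathEdges, ← List.map_tail, List.zip_map]

theorem pathEdges_append_of_getLast? {l₁ : List α} {a : α} (h : l₁.getLast? = some a)
    (l₂ : List α) : pathEdges (l₁ ++ l₂) = pathEdges l₁ ++ pathEdges (a :: l₂) := by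
  induction l₁ with
  | nil => simp at h
  | cons x l ih =>
    cases l with
    | nil =>
      obtain rfl : x = a := by simpa using h
      rfl
    | cons y l =>
      rw [List.getLast?_cons_cons] at h
      show (x, y) :: pathEdges (y :: l ++ l₂) = _
      rw [ih h]
      rfl

theorem List.isChain_append_of_getLast? {R : α → α → Prop} {l₁ : List α} {a : α}
    (h : l₁.getLast? = some a) (l₂ : List α) :
    (l₁ ++ l₂).IsChain R ↔ l₁.IsChain R ∧ (a :: l₂).IsChain R := by
  simp only [List.isChain_append, List.isChain_cons, h, Option.mem_def, Option.some.injEq,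
    forall_eq']
  exact and_congr_right fun _ => and_comm

theorem pathEdges_subset_of_isChain_unique_pred {R : α → α → Prop} {l p : List α}
    (hl : l.IsChain fun u v => ∀ w, R w v → w = u) (hp : p.IsChain R)
    (hlast : p.getLast? = l.getLast?) (hhead : ∀ x ∈ l.tail, p.head? ≠ some x) :
    pathEdges l ⊆ pathEdges p := by
  induction l using List.reverseRecOn generalizing p with
  | nil => simp [pathEdges]
  | append_singleton l y ih =>
    rcases l.eq_nil_or_concat with rfl | ⟨l, x, rfl⟩
    · simp [pathEdges]
    rw [List.concat_eq_append] at ih hl hhead ⊢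
    have htail : (l ++ [x] ++ [y]).tail = (l ++ [x]).tail ++ [y] :=
      List.tail_append_of_ne_nil (by simp)
    obtain ⟨q, rfl⟩ := List.getLast?_eq_some_iff.1 (by simpa using hlast)
    have hq0 : q ≠ [] := by
      rintro rfl
      exact hhead y (by rw [htail]; simp) rfl
    obtain ⟨u, hu⟩ := Option.isSome_iff_exists.1 (List.getLast?_isSome.2 hq0)
    have hx : (l ++ [x]).getLast? = some x := List.getLast?_concat
    rw [List.isChain_append_of_getLast? hx] at hl
    rw [List.isChain_append_of_getLast? hu] at hp
    obtain rfl : u = x := List.isChain_pair.1 hl.2 u (List.isChain_pair.1 hp.2)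
    intro e he
    rw [pathEdges_append_of_getLast? hx, List.mem_append] at he
    rw [pathEdges_append_of_getLast? hu, List.mem_append]
    refine he.imp_left fun h => ih hl.1 hp.1 (by rw [hu, hx]) (fun z hz => ?_) h
    rw [← List.head?_append_of_ne_nil _ hq0]
    exact hhead z (by rw [htail]; exact List.mem_append_left _ hz)

end PathEdges

theorem List.isChain_finRange (n : ℕ) :
    (List.finRange n).IsChain fun a b : Fin n => (b : ℕ) = a + 1 := by
  rw [List.isChain_iff_getElem]
  intro i hi
  simp only [List.getElem_finRange, Fin.val_cast]

theorem List.getLast?_finRange {n : ℕ} (m : Fin n) (hm : (m : ℕ) + 1 = n) :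
    (List.finRange n).getLast? = some m := by
  rw [List.getLast?_eq_getElem?, List.getElem?_eq_getElem (by simp; omega)]
  simp only [List.getElem_finRange, Option.some.injEq]
  ext; simp; omega

theorem List.val_eq_zero_of_mem_head?_finRange {n : ℕ} {m : Fin n}
    (h : m ∈ (List.finRange n).head?) : (m : ℕ) = 0 := by
  cases n with
  | zero => exact m.elim0
  | succ n =>
    rw [List.finRange_succ, List.head?_cons, Option.mem_some_iff] at h
    rw [← h, Fin.val_zero]

section TailConstruction

variable {V : Type} [Fintype V] {k : ℕ}

abbrev TailVertex (V : Type) [Fintype V] (k : ℕ) : Type :=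
  V ⊕ Fin k ⊕ Fin k × Fin (k * Fintype.card V)

variable (V) in
def tailVertices (i : Fin k) : List (TailVertex V k) :=
  (List.finRange (k * Fintype.card V)).map fun m => Sum.inr (Sum.inr (i, m))

def tailPath (t : Fin k → V) (i : Fin k) : List (TailVertex V k) :=
  Sum.inl (t i) :: tailVertices V i

def extendPath (i : Fin k) (q : List V) : List (TailVertex V k) :=
  (Sum.inr (Sum.inl i) :: q.map Sum.inl) ++ tailVertices V i

theorem getLast?_tailVertices {i : Fin k} {z : TailVertex V k} (hz : IsLastTail i z) :
    (tailVertices V i).getLast? = some z := by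
  obtain ⟨m, hm, rfl⟩ := hz
  simp [tailVertices, List.getLast?_map, List.getLast?_finRange m hm]

theorem owner_eq_of_inr_mem_extendPath {i : Fin k} {q : List V}
    {y : Fin k ⊕ Fin k × Fin (k * Fintype.card V)} (h : Sum.inr y ∈ extendPath i q) :
    Sum.elim id Prod.fst y = i := by
  simp only [extendPath, tailVertices, List.mem_append, List.mem_cons, List.mem_map,
    Sum.inr.injEq] at h
  rcases h with (rfl | ⟨_, _, h⟩) | ⟨_, _, rfl⟩
  · rfl
  · exact absurd h Sum.inl_ne_inr
  · rfl

variable {t : Fin k → V}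

theorem pathEdges_extendPath {i : Fin k} {q : List V} (hq : q.getLast? = some (t i)) :
    pathEdges (extendPath i q) =
      pathEdges (Sum.inr (Sum.inl i) :: q.map Sum.inl) ++ pathEdges (tailPath t i) :=
  pathEdges_append_of_getLast? (by simp [List.getLast?_cons, hq]) _

theorem mem_pathEdges_of_mem_pathEdges_extendPath {i : Fin k} {q : List V}
    (hq : q.getLast? = some (t i)) {u v : V}
    (h : (Sum.inl u, Sum.inl v) ∈ pathEdges (extendPath i q)) : (u, v) ∈ pathEdges q := by
  rw [pathEdges_extendPath hq, List.mem_append] at h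
  rcases h with h | h
  · cases q with
    | nil => simp [pathEdges] at h
    | cons a q =>
      rw [List.map_cons, pathEdges_cons_cons, ← List.map_cons, pathEdges_map, List.mem_cons,
        List.mem_map] at h
      rcases h with h | ⟨⟨a, b⟩, he, h⟩
      · simp at h
      · obtain ⟨rfl, rfl⟩ : a = u ∧ b = v := by simpa using h
        exact he
  · simpa [tailPath, tailVertices] using snd_mem_tail_of_mem_pathEdges h

theorem edgeDisjoint_extendPath {Q : Fin k → List V} (hQ : ∀ i, (Q i).getLast? = some (t i))
    (hdisj : EdgeDisjoint Q) : EdgeDisjoint fun i => extendPath i (Q i) := by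
  intro i j hij e hi hj
  rcases e with ⟨a | a, b | b⟩
  · exact hdisj i j hij _ (mem_pathEdges_of_mem_pathEdges_extendPath (hQ i) hi)
      (mem_pathEdges_of_mem_pathEdges_extendPath (hQ j) hj)
  · exact hij ((owner_eq_of_inr_mem_extendPath (snd_mem_of_mem_pathEdges hi)).symm.trans
      (owner_eq_of_inr_mem_extendPath (snd_mem_of_mem_pathEdges hj)))
  all_goals exact hij ((owner_eq_of_inr_mem_extendPath (fst_mem_of_mem_pathEdges hi)).symm.trans
      (owner_eq_of_inr_mem_extendPath (fst_mem_of_mem_pathEdges hj)))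

variable [DecidableEq V] {E : Finset (V × V)} {s : Fin k → V}

theorem mem_tailEdges {e : TailVertex V k × TailVertex V k} :
    e ∈ tailEdges E s t ↔ tailAdj E s t e = true := by
  simp only [tailEdges, Finset.mem_filter, Finset.mem_univ, true_and]

theorem mem_tailEdges_to_tail {w : TailVertex V k} {i : Fin k} {m : Fin (k * Fintype.card V)} :
    (w, Sum.inr (Sum.inr (i, m))) ∈ tailEdges E s t ↔
      ((m : ℕ) = 0 ∧ w = Sum.inl (t i)) ∨
        ∃ m' : Fin (k * Fintype.card V), (m : ℕ) = m' + 1 ∧ w = Sum.inr (Sum.inr (i, m')) := by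
  rw [mem_tailEdges]
  rcases w with v | j | ⟨j, m'⟩ <;> simp [tailAdj, and_comm]

theorem isChain_tailPath (i : Fin k) :
    (tailPath t i).IsChain fun u v =>
      (u, v) ∈ tailEdges E s t ∧ ∀ w, (w, v) ∈ tailEdges E s t → w = u := by
  rw [tailPath, tailVertices, List.isChain_cons, List.isChain_map]
  refine ⟨fun y hy => ?_, (List.isChain_finRange _).imp fun a b hab => ?_⟩
  · rw [List.head?_map] at hy
    obtain ⟨m, hm, rfl⟩ := Option.mem_map.1 hy
    have hm0 := List.val_eq_zero_of_mem_head?_finRange hm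
    refine ⟨mem_tailEdges_to_tail.2 (Or.inl ⟨hm0, rfl⟩), fun w hw => ?_⟩
    rcases mem_tailEdges_to_tail.1 hw with ⟨-, rfl⟩ | ⟨m', hm', -⟩
    · rfl
    · omega
  · refine ⟨mem_tailEdges_to_tail.2 (Or.inr ⟨a, hab, rfl⟩), fun w hw => ?_⟩
    rcases mem_tailEdges_to_tail.1 hw with ⟨hb0, -⟩ | ⟨m', hm', rfl⟩
    · omega
    · obtain rfl : m' = a := Fin.ext (by omega)
      rfl

theorem pathEdges_tailPath_subset {i : Fin k} {z : TailVertex V k} (hz : IsLastTail i z)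
    {p : List (TailVertex V k)} (hp : IsPathFrom (tailEdges E s t) p (Sum.inr (Sum.inl i)) z) :
    pathEdges (tailPath t i) ⊆ pathEdges p := by
  refine pathEdges_subset_of_isChain_unique_pred ((isChain_tailPath i).imp fun _ _ h => h.2)
    hp.1.2.2 ?_ ?_
  · simp [hp.2.2, tailPath, List.getLast?_cons, getLast?_tailVertices hz]
  · simp [hp.2.1, tailPath, tailVertices]

theorem isPathFrom_extendPath {i : Fin k} {q : List V} {z : TailVertex V k}
    (hq : IsPathFrom E q (s i) (t i)) (hz : IsLastTail i z) :
    IsPathFrom (tailEdges E s t) (extendPath i q) (Sum.inr (Sum.inl i)) z := by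
  obtain ⟨⟨-, hnodup, hchain⟩, hhead, hlast⟩ := hq
  refine ⟨⟨by simp [extendPath], ?_, ?_⟩, by simp [extendPath], ?_⟩
  · rw [extendPath, List.nodup_append, List.nodup_cons]
    refine ⟨⟨by simp, hnodup.map Sum.inl_injective⟩,
      (List.nodup_finRange _).map fun a b h => by simpa using h, ?_⟩
    simp [tailVertices]
  · have hlast' : (Sum.inr (Sum.inl i) :: q.map Sum.inl : List (TailVertex V k)).getLast? =
        some (Sum.inl (t i)) := by
      simp [List.getLast?_cons, hlast]
    rw [extendPath, List.Chain', List.isChain_append_of_getLast? hlast', List.isChain_cons,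
      List.isChain_map]
    refine ⟨⟨fun y hy => ?_, hchain.imp fun a b h => ?_⟩,
      (isChain_tailPath i).imp fun _ _ h => h.1⟩
    · obtain rfl : y = Sum.inl (s i) := by simpa [List.head?_map, hhead] using hy.symm
      simp [mem_tailEdges, tailAdj]
    · exact mem_tailEdges.2 (by simpa [tailAdj] using h)
  · rw [extendPath, List.getLast?_append, getLast?_tailVertices hz]
    rfl

theorem mul_card_le_listWeight_extendPath {i : Fin k} {q : List V} {z : TailVertex V k}
    (hq : q.getLast? = some (t i)) (hz : IsLastTail i z) {p : List (TailVertex V k)}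
    (hp : IsPathFrom (tailEdges E s t) p (Sum.inr (Sum.inl i)) z)
    {wt : TailVertex V k × TailVertex V k → ℕ} (hwt : ∀ e ∈ pathEdges p, wt e = 1) :
    k * Fintype.card V ≤ listWeight wt (extendPath i q) := by
  have hsub := pathEdges_tailPath_subset hz hp
  calc k * Fintype.card V = (pathEdges (tailPath t i)).length := by
        simp [tailPath, tailVertices, pathEdges]
    _ ≤ ((pathEdges (tailPath t i)).map wt).sum := by
        simpa using List.length_le_sum_of_one_le ((pathEdges (tailPath t i)).map wt) (by
          simp only [List.mem_map]
          rintro _ ⟨e, he, rfl⟩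
          rw [hwt e (hsub he)])
    _ ≤ listWeight wt (extendPath i q) := by
        rw [listWeight, pathEdges_extendPath hq, List.map_append, List.sum_append]
        exact Nat.le_add_left _ _

end TailConstruction

theorem stmt6_general {V : Type} [Fintype V] [DecidableEq V] (E : Finset (V × V)) (k : ℕ)
    (s t : Fin k → V)
    (t' : Fin k → V ⊕ Fin k ⊕ Fin k × Fin (k * Fintype.card V))
    (ht' : ∀ i, IsLastTail i (t' i))
    (R : Fin k → List (V ⊕ Fin k ⊕ Fin k × Fin (k * Fintype.card V)))
    (hR : ∀ i, IsPathFrom (tailEdges E s t) (R i) (Sum.inr (Sum.inl i)) (t' i))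
    (w : Fin k → (V ⊕ Fin k ⊕ Fin k × Fin (k * Fintype.card V)) ×
                 (V ⊕ Fin k ⊕ Fin k × Fin (k * Fintype.card V)) → ℕ)
    (hw : ∀ i e, (e ∈ pathEdges (R i) → w i e = 1) ∧ (e ∉ pathEdges (R i) → w i e = 0))
    (Q : Fin k → List V) (hQ : ∀ i, IsPathFrom E (Q i) (s i) (t i))
    (hQdisj : EdgeDisjoint Q) :
    ∃ P : Fin k → List (V ⊕ Fin k ⊕ Fin k × Fin (k * Fintype.card V)),
      EdgeDisjoint P ∧
      (∀ i, IsPathFrom (tailEdges E s t) (P i) (Sum.inr (Sum.inl i)) (t' i)) ∧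
      k ^ 2 * Fintype.card V ≤ ∑ i, listWeight (w i) (P i) := by
  refine ⟨fun i => extendPath i (Q i), edgeDisjoint_extendPath (fun i => (hQ i).2.2) hQdisj,
    fun i => isPathFrom_extendPath (hQ i) (ht' i), ?_⟩
  calc k ^ 2 * Fintype.card V = ∑ _i : Fin k, k * Fintype.card V := by simp; ring
    _ ≤ ∑ i, listWeight (w i) (extendPath i (Q i)) :=
      Finset.sum_le_sum fun i _ => mul_card_le_listWeight_extendPath (hQ i).2.2 (ht' i)
        (hR i) fun e he => (hw i e).1 he

/-- If `G` has `k` pairwise edge-disjoint paths `Qᵢ` from `sᵢ` to `tᵢ`,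
then the tail-construction graph `G'`, with weights `wᵉᵢ` the indicators of chosen paths
`Rᵢ` from `sᵢ'` to `tᵢ'`, has `k` pairwise edge-disjoint paths `Pᵢ` from `sᵢ'` to `tᵢ'`
of total cost at least `k² · |V|`. -/
theorem stmt6 {V : Type} [Fintype V] [DecidableEq V] (E : Finset (V × V)) (k : ℕ)
    (s t : Fin k → V) (hacyc : Acyclic E) (hac : AntConservation E k s t)
    (t' : Fin k → V ⊕ Fin k ⊕ Fin k × Fin (k * Fintype.card V))
    (ht' : ∀ i, IsLastTail i (t' i))
    (R : Fin k → List (V ⊕ Fin k ⊕ Fin k × Fin (k * Fintype.card V)))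
    (hR : ∀ i, IsPathFrom (tailEdges E s t) (R i) (Sum.inr (Sum.inl i)) (t' i))
    (w : Fin k → (V ⊕ Fin k ⊕ Fin k × Fin (k * Fintype.card V)) ×
                 (V ⊕ Fin k ⊕ Fin k × Fin (k * Fintype.card V)) → ℕ)
    (hw : ∀ i e, (e ∈ pathEdges (R i) → w i e = 1) ∧ (e ∉ pathEdges (R i) → w i e = 0))
    (Q : Fin k → List V) (hQ : ∀ i, IsPathFrom E (Q i) (s i) (t i))
    (hQdisj : EdgeDisjoint Q) :
    ∃ P : Fin k → List (V ⊕ Fin k ⊕ Fin k × Fin (k * Fintype.card V)),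
      EdgeDisjoint P ∧
      (∀ i, IsPathFrom (tailEdges E s t) (P i) (Sum.inr (Sum.inl i)) (t' i)) ∧
      k ^ 2 * Fintype.card V ≤ ∑ i, listWeight (w i) (P i) :=
  stmt6_general E k s t t' ht' R hR w hw Q hQ hQdisj
end

section
/- Let G = (V, E) be a finite directed acyclic graph satisfying the ant-conservation condition with sources s_1, …, s_k and destinations t_1, …, t_k, let G' be the graph obtained by the tail construction, and let the weights w_e^i be defined from chosen paths R_i from s_i' to t_i'. If P_1, …, P_k are pairwise edge-disjoint directed paths in G' such that each P_i starts at s_i' and ends at some vertex of outdegree 0, and Σ_{i=1}^k Σ_{e ∈ P_i} w_e^i ≥ k²·|V|, then for every i the path P_i ends at t_i' and passes through s_i and t_i, and the portions of the paths P_i lying inside G form k pairwise edge-disjoint directed paths in G, the i-th going from s_i to t_i. -/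
/-- The portion of a list of edges of `G'` lying inside `G`: keep exactly the edges both
of whose endpoints are original vertices. -/
def innerEdges {V A : Type} (l : List ((V ⊕ A) × (V ⊕ A))) : List (V × V) :=
  l.filterMap (fun e =>
    match e with
    | (Sum.inl u, Sum.inl v) => some (u, v)
    | _ => none)

/-!
Every maximal path of `G'` starting at `sᵢ'` consists of `sᵢ'`, a path of `G` from `sᵢ` to some
`t_{σ i}`, and the whole `σ i`-th tail; in particular so does `Rᵢ`, with `σ i = i`. Edge-disjoint
paths leave `G` through distinct edges `(tⱼ, t_{j,1})`, so `σ` is a permutation. A path `Pᵢ` shares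
at most `|V|` edges with `Rᵢ` before the tails, and the `k|V|` tail edges of `Rᵢ` only if
`σ i = i`. Hence the total weight is at most `k|V| + k|V| · #{i | σ i = i}`, and reaching `k²|V|`
leaves at most one `i` unfixed; a permutation cannot move exactly one point, so `σ = id`, and the
parts of the `Pᵢ` inside `G` are the required paths.
-/

namespace TailConstruction

open Finset

section PathEdges

variable {α : Type}

@[simp] lemma pathEdges_nil : pathEdges ([] : List α) = [] := rfl

@[simp] lemma pathEdges_singleton (a : α) : pathEdges [a] = [] := rfl

@[simp] lemma pathEdges_cons_cons (a b : α) (l : List α) :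
    pathEdges (a :: b :: l) = (a, b) :: pathEdges (b :: l) := rfl

lemma length_pathEdges (l : List α) : (pathEdges l).length = l.length - 1 := by
  simp [pathEdges]

lemma mem_of_mem_pathEdges {e : α × α} {l : List α} (h : e ∈ pathEdges l) :
    e.1 ∈ l ∧ e.2 ∈ l :=
  ⟨List.of_mem_zip h |>.1, List.mem_of_mem_tail (List.of_mem_zip h).2⟩

lemma mem_pathEdges_cons_of_mem {e : α × α} {l : List α} (a : α) (h : e ∈ pathEdges l) :
    e ∈ pathEdges (a :: l) := by
  cases l with
  | nil => simp at h
  | cons b l => exact List.mem_cons_of_mem _ h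

lemma nodup_pathEdges {l : List α} (h : l.Nodup) : (pathEdges l).Nodup := by
  induction l with
  | nil => simp
  | cons a l ih =>
    cases l with
    | nil => simp
    | cons b l =>
      rw [pathEdges_cons_cons, List.nodup_cons]
      exact ⟨fun hab => (List.nodup_cons.mp h).1 (mem_of_mem_pathEdges hab).1,
        ih (List.nodup_cons.mp h).2⟩

lemma mem_pathEdges_append {e : α × α} {l₁ l₂ : List α} (h : e ∈ pathEdges (l₁ ++ l₂)) :
    e ∈ pathEdges l₁ ∨ e.2 ∈ l₂ := by
  induction l₁ with
  | nil => exact Or.inr (mem_of_mem_pathEdges h).2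
  | cons a l₁ ih =>
    cases l₁ with
    | nil => exact Or.inr (List.of_mem_zip h).2
    | cons b l₁ =>
      rcases List.mem_cons.mp h with rfl | h
      · simp
      · exact (ih h).imp_left (List.mem_cons_of_mem _)

lemma mem_pathEdges_append_of_getLast?_of_head? {l₁ l₂ : List α} {a b : α}
    (h₁ : l₁.getLast? = some a) (h₂ : l₂.head? = some b) :
    (a, b) ∈ pathEdges (l₁ ++ l₂) := by
  obtain ⟨l₂, rfl⟩ : ∃ l, l₂ = b :: l := by
    cases l₂ with
    | nil => simp at h₂
    | cons c l => exact ⟨l, by simpa using h₂⟩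
  induction l₁ with
  | nil => simp at h₁
  | cons c l₁ ih =>
    cases l₁ with
    | nil => simp_all
    | cons d l₁ =>
      rw [List.getLast?_cons_cons] at h₁
      exact mem_pathEdges_cons_of_mem c (ih h₁)

end PathEdges

lemma listWeight_le_length_of_support_subset {α : Type} [DecidableEq α] {wt : α × α → ℕ}
    {p : List α} {L : List (α × α)} (hp : (pathEdges p).Nodup) (hwt : ∀ e, wt e ≤ 1)
    (hL : ∀ e ∈ pathEdges p, wt e ≠ 0 → e ∈ L) :
    listWeight wt p ≤ L.length := by
  set S := (pathEdges p).toFinset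
  calc listWeight wt p = ∑ e ∈ S, wt e := by
        rw [listWeight, List.sum_toFinset _ hp]
    _ = ∑ e ∈ S with wt e ≠ 0, wt e := (sum_filter_ne_zero _).symm
    _ ≤ #{e ∈ S | wt e ≠ 0} := by
        simpa using sum_le_card_nsmul _ _ 1 (fun e _ => hwt e)
    _ ≤ #L.toFinset := card_le_card fun e he => by
        simp only [mem_filter, List.mem_toFinset, S] at he ⊢
        exact hL e he.1 he.2
    _ ≤ L.length := List.toFinset_card_le L

section InnerEdges

variable {V A : Type}

lemma mem_innerEdges {l : List ((V ⊕ A) × (V ⊕ A))} {u v : V} :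
    (u, v) ∈ innerEdges l ↔ (Sum.inl u, Sum.inl v) ∈ l := by
  simp only [innerEdges, List.mem_filterMap]
  constructor
  · rintro ⟨⟨x | x, y | y⟩, hmem, hev⟩ <;> simp at hev
    obtain ⟨rfl, rfl⟩ := hev
    exact hmem
  · exact fun h => ⟨_, h, rfl⟩

lemma innerEdges_pathEdges_cons_inr (a : A) (l : List (V ⊕ A)) :
    innerEdges (pathEdges (Sum.inr a :: l)) = innerEdges (pathEdges l) := by
  cases l with
  | nil => rfl
  | cons y l => rcases y with y | y <;> rfl

lemma innerEdges_pathEdges_map_inl_append (l : List V) {l' : List (V ⊕ A)}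
    (hl' : ∀ x ∈ l', x.isRight) :
    innerEdges (pathEdges (l.map Sum.inl ++ l')) = pathEdges l := by
  induction l with
  | nil =>
    refine List.filterMap_eq_nil_iff.mpr fun e he => ?_
    obtain ⟨x, y⟩ := e
    obtain ⟨b, rfl⟩ := Sum.isRight_iff.mp (hl' x (mem_of_mem_pathEdges he).1)
    rfl
  | cons a l ih =>
    cases l with
    | nil =>
      cases l' with
      | nil => rfl
      | cons y l' =>
        obtain ⟨b, rfl⟩ := Sum.isRight_iff.mp (hl' y List.mem_cons_self)
        simpa [innerEdges] using ih
    | cons b l =>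
      simpa [innerEdges] using ih

lemma EdgeDisjoint.of_innerEdges {k : ℕ} {P : Fin k → List (V ⊕ A)} {Q : Fin k → List V}
    (hP : EdgeDisjoint P) (hQ : ∀ i, pathEdges (Q i) = innerEdges (pathEdges (P i))) :
    EdgeDisjoint Q := by
  rintro i j hij ⟨u, v⟩ hi hj
  rw [hQ, mem_innerEdges] at hi hj
  exact hP i j hij _ hi hj

end InnerEdges

lemma Function.Injective.eq_self_of_card_le {α : Type} [Fintype α] [DecidableEq α]
    {f : α → α} (hf : f.Injective) (h : Fintype.card α ≤ #{i | f i = i} + 1) (i : α) :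
    f i = i := by
  by_contra hi
  have hfi : f (f i) ≠ f i := fun hfix => hi (hf hfix)
  have hmoved : #{i, f i} ≤ #{x | ¬f x = x} := card_le_card <| by
    intro x hx
    rcases mem_insert.mp hx with rfl | hx
    · simpa using hi
    · simpa [mem_singleton.mp hx] using hfi
  rw [card_pair (Ne.symm hi)] at hmoved
  have := card_filter_add_card_filter_not (s := univ) (fun x => f x = x)
  simp only [card_univ] at this
  omega

lemma card_le_card_filter_add_one {ι : Type} [Fintype ι] {p : ι → Prop} [DecidablePred p]
    {a : ℕ} (ha : 0 < a) {c : ι → ℕ}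
    (hc : ∀ i, c i ≤ a + if p i then Fintype.card ι * a else 0)
    (hsum : Fintype.card ι ^ 2 * a ≤ ∑ i, c i) :
    Fintype.card ι ≤ #{i | p i} + 1 := by
  set n := Fintype.card ι
  have htotal : n * (n * a) ≤ (#{i | p i} + 1) * (n * a) := calc
    n * (n * a) = n ^ 2 * a := by ring
    _ ≤ ∑ i, (a + if p i then n * a else 0) := hsum.trans (sum_le_sum fun i _ => hc i)
    _ = (#{i | p i} + 1) * (n * a) := by
      rw [sum_add_distrib, sum_ite, sum_const_zero, sum_const, sum_const, card_univ]
      simp only [smul_eq_mul]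
      ring
  rcases Nat.eq_zero_or_pos n with hn | hn
  · omega
  · exact Nat.le_of_mul_le_mul_right htotal (Nat.mul_pos hn ha)

abbrev TailVertex (V : Type) [Fintype V] (k : ℕ) : Type :=
  V ⊕ Fin k ⊕ Fin k × Fin (k * Fintype.card V)

section Tail

variable {V : Type} [Fintype V] {k : ℕ}

def tailFrom (j : Fin k) (m : ℕ) : List (TailVertex V k) :=
  ((List.finRange (k * Fintype.card V)).drop m).map fun m' => Sum.inr (Sum.inr (j, m'))

def routePath (i : Fin k) (q : List V) (j : Fin k) : List (TailVertex V k) :=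
  Sum.inr (Sum.inl i) :: (q.map Sum.inl ++ tailFrom j 0)

lemma length_tailFrom (j : Fin k) (m : ℕ) :
    (tailFrom (V := V) j m).length = k * Fintype.card V - m := by
  simp [tailFrom]

lemma tailFrom_eq_cons {m : ℕ} (hm : m < k * Fintype.card V) (j : Fin k) :
    tailFrom (V := V) j m = Sum.inr (Sum.inr (j, ⟨m, hm⟩)) :: tailFrom j (m + 1) := by
  rw [tailFrom, List.drop_eq_getElem_cons (by simpa using hm)]
  simp [tailFrom]

lemma tailFrom_eq_nil {m : ℕ} (hm : k * Fintype.card V ≤ m) (j : Fin k) :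
    tailFrom (V := V) j m = [] :=
  List.eq_nil_of_length_eq_zero (by rw [length_tailFrom]; omega)

lemma exists_eq_of_mem_tailFrom {j : Fin k} {m : ℕ} {x : TailVertex V k}
    (hx : x ∈ tailFrom j m) : ∃ m', x = Sum.inr (Sum.inr (j, m')) := by
  obtain ⟨m', -, rfl⟩ := List.mem_map.mp hx
  exact ⟨m', rfl⟩

lemma head?_tailFrom_zero (hkn : 0 < k * Fintype.card V) (j : Fin k) :
    (tailFrom (V := V) j 0).head? = some (Sum.inr (Sum.inr (j, ⟨0, hkn⟩))) := by
  rw [tailFrom_eq_cons hkn]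
  rfl

lemma IsLastTail.index_eq {i j : Fin k} {z : TailVertex V k} (hi : IsLastTail i z)
    (hj : IsLastTail j z) : i = j := by
  obtain ⟨m, -, rfl⟩ := hi
  obtain ⟨m', -, h⟩ := hj
  simp only [Sum.inr.injEq, Prod.mk.injEq] at h
  exact h.1

lemma exists_isLastTail (hkn : 0 < k * Fintype.card V) (j : Fin k) :
    ∃ z : TailVertex V k, IsLastTail j z :=
  ⟨_, ⟨k * Fintype.card V - 1, by omega⟩, by simp only; omega, rfl⟩

lemma getLast?_tailFrom_zero {j : Fin k} {z : TailVertex V k} (hz : IsLastTail j z) :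
    (tailFrom j 0).getLast? = some z := by
  obtain ⟨m, hm, rfl⟩ := hz
  rw [tailFrom, List.drop_zero, List.getLast?_map, List.getLast?_eq_getElem?,
    List.getElem?_eq_getElem (by rw [List.length_finRange]; omega)]
  simp only [List.length_finRange, List.getElem_finRange, Option.map_some, Option.some.injEq,
    Sum.inr.injEq, Prod.mk.injEq, true_and]
  exact Fin.ext (by simp only [Fin.val_cast]; omega)

lemma getLast?_routePath (i : Fin k) (q : List V) {j : Fin k} {z : TailVertex V k}
    (hz : IsLastTail j z) : (routePath i q j).getLast? = some z := by
  rw [routePath, ← List.cons_append, List.getLast?_append, getLast?_tailFrom_zero hz]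
  rfl

lemma inl_mem_routePath (i : Fin k) {q : List V} (j : Fin k) {v : V} (hv : v ∈ q) :
    Sum.inl v ∈ routePath i q j :=
  List.mem_cons_of_mem _ (List.mem_append_left _ (List.mem_map_of_mem hv))

lemma index_eq_of_mem_routePath {i j j' : Fin k} {q : List V} {m : Fin (k * Fintype.card V)}
    (h : Sum.inr (Sum.inr (j', m)) ∈ routePath i q j) : j' = j := by
  rcases List.mem_cons.mp h with h | h
  · simp at h
  rcases List.mem_append.mp h with h | h
  · simp at h
  obtain ⟨m', hm'⟩ := exists_eq_of_mem_tailFrom h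
  simp only [Sum.inr.injEq, Prod.mk.injEq] at hm'
  exact hm'.1

lemma length_pathEdges_routePath (i : Fin k) (q : List V) (j : Fin k) :
    (pathEdges (routePath i q j)).length = q.length + k * Fintype.card V := by
  simp [length_pathEdges, routePath, length_tailFrom]

lemma exit_mem_pathEdges_routePath (hkn : 0 < k * Fintype.card V) (i : Fin k) {q : List V}
    {j : Fin k} {b : V} (hq : q.getLast? = some b) :
    (Sum.inl b, Sum.inr (Sum.inr (j, ⟨0, hkn⟩))) ∈ pathEdges (routePath i q j) :=
  mem_pathEdges_cons_of_mem _ <| mem_pathEdges_append_of_getLast?_of_head?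
    (by rw [List.getLast?_map, hq]; rfl) (head?_tailFrom_zero hkn j)

lemma innerEdges_pathEdges_routePath (i : Fin k) (q : List V) (j : Fin k) :
    innerEdges (pathEdges (routePath i q j)) = pathEdges q := by
  rw [routePath, innerEdges_pathEdges_cons_inr]
  refine innerEdges_pathEdges_map_inl_append q fun x hx => ?_
  obtain ⟨m, rfl⟩ := exists_eq_of_mem_tailFrom hx
  rfl

lemma nodup_of_nodup_routePath {i j : Fin k} {q : List V} (h : (routePath i q j).Nodup) :
    q.Nodup :=
  (List.nodup_append.mp (List.nodup_cons.mp h).2).1.of_map _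

end Tail

section TailGraph

variable {V : Type} [Fintype V] [DecidableEq V] {k : ℕ} {E : Finset (V × V)} {s t : Fin k → V}

@[simp] lemma mem_tailEdges {e : TailVertex V k × TailVertex V k} :
    e ∈ tailEdges E s t ↔ tailAdj E s t e = true := by
  simp [tailEdges]

omit [Fintype V] in
lemma outdeg_ne_zero_of_mem {F : Finset (V × V)} {z x : V} (h : (z, x) ∈ F) :
    outdeg F z ≠ 0 :=
  card_ne_zero_of_mem (mem_filter.mpr ⟨h, rfl⟩)

lemma outdeg_tailEdges_of_isLastTail {j : Fin k} {z : TailVertex V k} (hz : IsLastTail j z) :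
    outdeg (tailEdges E s t) z = 0 := by
  obtain ⟨m, hm, rfl⟩ := hz
  refine card_eq_zero.mpr (filter_eq_empty_iff.mpr ?_)
  rintro ⟨x, y⟩ hxy rfl
  rcases y with v | i | ⟨j', m'⟩ <;> simp [tailAdj] at hxy
  omega

lemma outdeg_tailEdges_inl_ne_zero (hd : ∀ v, outdeg E v = 0 → ∃ j, t j = v)
    (hkn : 0 < k * Fintype.card V) (v : V) :
    outdeg (tailEdges E s t) (Sum.inl v) ≠ 0 := by
  by_cases h : outdeg E v = 0
  · obtain ⟨j, rfl⟩ := hd v h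
    exact outdeg_ne_zero_of_mem (x := Sum.inr (Sum.inr (j, ⟨0, hkn⟩))) (by simp [tailAdj])
  · obtain ⟨⟨a, b⟩, he⟩ := card_pos.mp (Nat.pos_of_ne_zero h)
    obtain ⟨he, rfl : a = v⟩ := mem_filter.mp he
    exact outdeg_ne_zero_of_mem (x := Sum.inl b) (by simpa [tailAdj])

lemma eq_tailFrom_of_isChain {p : List (TailVertex V k)}
    (hc : p.IsChain fun u v => (u, v) ∈ tailEdges E s t)
    (hz : ∀ z ∈ p.getLast?, outdeg (tailEdges E s t) z = 0) {j : Fin k}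
    {m : Fin (k * Fintype.card V)} (hh : p.head? = some (Sum.inr (Sum.inr (j, m)))) :
    p = tailFrom j m := by
  induction p generalizing m with
  | nil => simp at hh
  | cons x p ih =>
    obtain rfl : x = _ := Option.some.inj hh
    rw [tailFrom_eq_cons m.isLt]
    cases p with
    | nil =>
      refine congrArg _ (tailFrom_eq_nil (Nat.not_lt.mp fun hlt => ?_) j).symm
      exact outdeg_ne_zero_of_mem (x := Sum.inr (Sum.inr (j, ⟨m + 1, hlt⟩)))
        (by simp [tailAdj]) (hz _ rfl)
    | cons y p =>
      have hxy := List.rel_of_isChain_cons_cons hc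
      rcases y with v | i | ⟨j', m'⟩ <;> simp [tailAdj] at hxy
      obtain ⟨rfl, hm'⟩ := hxy
      rw [← hm', ih hc.of_cons (fun z hz' => hz z (by rwa [List.getLast?_cons_cons])) rfl]

lemma exists_eq_map_inl_append_tailFrom (hd : ∀ v, outdeg E v = 0 → ∃ j, t j = v)
    (hkn : 0 < k * Fintype.card V) {p : List (TailVertex V k)}
    (hc : p.IsChain fun u v => (u, v) ∈ tailEdges E s t)
    (hz : ∀ z ∈ p.getLast?, outdeg (tailEdges E s t) z = 0) {v : V}
    (hh : p.head? = some (Sum.inl v)) :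
    ∃ (q : List V) (j : Fin k), q.head? = some v ∧ q.getLast? = some (t j) ∧
      q.IsChain (fun a b => (a, b) ∈ E) ∧ p = q.map Sum.inl ++ tailFrom j 0 := by
  induction p generalizing v with
  | nil => simp at hh
  | cons x p ih =>
    obtain rfl : x = _ := Option.some.inj hh
    cases p with
    | nil => exact absurd (hz _ rfl) (outdeg_tailEdges_inl_ne_zero hd hkn v)
    | cons y p =>
      have hz' : ∀ z ∈ (y :: p).getLast?, outdeg (tailEdges E s t) z = 0 :=
        fun z h => hz z (by rwa [List.getLast?_cons_cons])
      have hxy := List.rel_of_isChain_cons_cons hc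
      rcases y with v' | i | ⟨j, m⟩ <;> simp [tailAdj] at hxy
      · obtain ⟨q, j, hqh, hql, hqc, hp⟩ := ih hc.of_cons hz' rfl
        obtain ⟨q, rfl⟩ : ∃ q', q = v' :: q' := ⟨q.tail, (List.cons_head?_tail hqh).symm⟩
        exact ⟨v :: v' :: q, j, rfl, by rwa [List.getLast?_cons_cons],
          hqc.cons_cons hxy, by rw [hp]; rfl⟩
      · obtain ⟨rfl, hm⟩ := hxy
        refine ⟨[t j], j, rfl, rfl, List.isChain_singleton _, ?_⟩
        rw [eq_tailFrom_of_isChain hc.of_cons hz' rfl, show m = ⟨0, hkn⟩ from Fin.ext hm]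
        rfl

lemma exists_eq_routePath (hd : ∀ v, outdeg E v = 0 → ∃ j, t j = v)
    (hkn : 0 < k * Fintype.card V) {p : List (TailVertex V k)} {i : Fin k}
    {z : TailVertex V k} (hp : IsPathFrom (tailEdges E s t) p (Sum.inr (Sum.inl i)) z)
    (hz : outdeg (tailEdges E s t) z = 0) :
    ∃ (q : List V) (j : Fin k), IsPathFrom E q (s i) (t j) ∧ p = routePath i q j := by
  obtain ⟨⟨-, hnd, hc⟩, hh, hl⟩ := hp
  have hzp : ∀ z' ∈ p.getLast?, outdeg (tailEdges E s t) z' = 0 := by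
    simp only [hl, Option.mem_def, Option.some.injEq]
    rintro _ rfl
    exact hz
  rcases p with _ | ⟨x, _ | ⟨y, p⟩⟩
  · simp at hh
  · obtain rfl : x = _ := Option.some.inj hh
    exact absurd (hzp _ rfl) (outdeg_ne_zero_of_mem (x := Sum.inl (s i)) (by simp [tailAdj]))
  · obtain rfl : x = _ := Option.some.inj hh
    have hxy := List.rel_of_isChain_cons_cons hc
    rcases y with v | i' | ⟨j, m⟩ <;> simp [tailAdj] at hxy
    subst hxy
    obtain ⟨q, j, hqh, hql, hqc, hp⟩ := exists_eq_map_inl_append_tailFrom hd hkn hc.of_cons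
      (fun z h => hzp z (by rwa [List.getLast?_cons_cons])) rfl
    have hroute : Sum.inr (Sum.inl i) :: Sum.inl (s i) :: p = routePath i q j := by rw [hp]; rfl
    refine ⟨q, j, ⟨⟨?_, nodup_of_nodup_routePath (hroute ▸ hnd), hqc⟩, hqh, hql⟩, hroute⟩
    rintro rfl
    simp at hqh

lemma exists_eq_routePath_self (hd : ∀ v, outdeg E v = 0 → ∃ j, t j = v)
    (hkn : 0 < k * Fintype.card V) {p : List (TailVertex V k)} {i : Fin k}
    {z : TailVertex V k} (hp : IsPathFrom (tailEdges E s t) p (Sum.inr (Sum.inl i)) z)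
    (hz : IsLastTail i z) :
    ∃ r : List V, IsPathFrom E r (s i) (t i) ∧ p = routePath i r i := by
  obtain ⟨r, j, hr, rfl⟩ := exists_eq_routePath hd hkn hp (outdeg_tailEdges_of_isLastTail hz)
  obtain ⟨z', hz'⟩ := exists_isLastTail hkn j
  obtain rfl : z' = z := Option.some.inj ((getLast?_routePath i r hz').symm.trans hp.2.2)
  obtain rfl := IsLastTail.index_eq hz' hz
  exact ⟨r, hr, rfl⟩

end TailGraph

section Weights

variable {V : Type} [Fintype V] [DecidableEq V] {k : ℕ}

lemma listWeight_routePath_le {wt : TailVertex V k × TailVertex V k → ℕ} {i j : Fin k}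
    {q r : List V} (hq : (routePath i q j).Nodup) (hr : r.Nodup)
    (hwt : ∀ e, (e ∈ pathEdges (routePath i r i) → wt e = 1) ∧
      (e ∉ pathEdges (routePath i r i) → wt e = 0)) :
    listWeight wt (routePath i q j) ≤
      Fintype.card V + if j = i then k * Fintype.card V else 0 := by
  have hwt_le : ∀ e, wt e ≤ 1 := fun e => by
    by_cases he : e ∈ pathEdges (routePath i r i)
    · exact ((hwt e).1 he).le
    · exact ((hwt e).2 he).trans_le zero_le_one
  have hsupp : ∀ e, wt e ≠ 0 → e ∈ pathEdges (routePath i r i) :=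
    fun e h => by_contra fun he => h ((hwt e).2 he)
  have hr_card := hr.length_le_card
  split_ifs with hji
  · calc listWeight wt (routePath i q j)
        ≤ (pathEdges (routePath i r i)).length :=
          listWeight_le_length_of_support_subset (nodup_pathEdges hq) hwt_le fun e _ => hsupp e
      _ ≤ _ := by rw [length_pathEdges_routePath]; omega
  · -- the other edges of `Rᵢ` end on the `i`-th tail, which `routePath i q j` avoids
    calc listWeight wt (routePath i q j)
        ≤ (pathEdges (Sum.inr (Sum.inl i) :: r.map Sum.inl : List (TailVertex V k))).length := by
          refine listWeight_le_length_of_support_subset (nodup_pathEdges hq) hwt_le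
            fun e he hne => ?_
          refine (mem_pathEdges_append (l₂ := tailFrom i 0) (hsupp e hne)).resolve_right ?_
          intro htail
          obtain ⟨m, hm⟩ := exists_eq_of_mem_tailFrom htail
          exact hji (index_eq_of_mem_routePath (hm ▸ (mem_of_mem_pathEdges he).2)).symm
      _ ≤ _ := by simp [length_pathEdges, hr_card]

end Weights

lemma injective_of_edgeDisjoint {V : Type} [Fintype V] {k : ℕ} (hkn : 0 < k * Fintype.card V)
    {t : Fin k → V} {P : Fin k → List (TailVertex V k)} (hP : EdgeDisjoint P)
    {q : Fin k → List V} {σ : Fin k → Fin k} (hq : ∀ i, (q i).getLast? = some (t (σ i)))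
    (hPq : ∀ i, P i = routePath i (q i) (σ i)) : σ.Injective := by
  intro a b hab
  by_contra hne
  have hexit : ∀ c, (Sum.inl (t (σ c)), Sum.inr (Sum.inr (σ c, ⟨0, hkn⟩))) ∈ pathEdges (P c) :=
    fun c => hPq c ▸ exit_mem_pathEdges_routePath hkn c (hq c)
  exact hP a b hne _ (hexit a) (hab ▸ hexit b)

end TailConstruction

open TailConstruction

theorem stmt8_general {V : Type} [Fintype V] [DecidableEq V] (E : Finset (V × V)) (k : ℕ)
    (s t : Fin k → V) (hac : AntConservation E k s t)
    (t' : Fin k → V ⊕ Fin k ⊕ Fin k × Fin (k * Fintype.card V))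
    (ht' : ∀ i, IsLastTail i (t' i))
    (R : Fin k → List (V ⊕ Fin k ⊕ Fin k × Fin (k * Fintype.card V)))
    (hR : ∀ i, IsPathFrom (tailEdges E s t) (R i) (Sum.inr (Sum.inl i)) (t' i))
    (w : Fin k → (V ⊕ Fin k ⊕ Fin k × Fin (k * Fintype.card V)) ×
                 (V ⊕ Fin k ⊕ Fin k × Fin (k * Fintype.card V)) → ℕ)
    (hw : ∀ i e, (e ∈ pathEdges (R i) → w i e = 1) ∧ (e ∉ pathEdges (R i) → w i e = 0))
    (P : Fin k → List (V ⊕ Fin k ⊕ Fin k × Fin (k * Fintype.card V)))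
    (hPdisj : EdgeDisjoint P)
    (hP : ∀ i, ∃ z, outdeg (tailEdges E s t) z = 0 ∧
      IsPathFrom (tailEdges E s t) (P i) (Sum.inr (Sum.inl i)) z)
    (hcost : k ^ 2 * Fintype.card V ≤ ∑ i, listWeight (w i) (P i)) :
    (∀ i, (P i).getLast? = some (t' i) ∧
      Sum.inl (s i) ∈ P i ∧ Sum.inl (t i) ∈ P i) ∧
    ∃ Q : Fin k → List V,
      EdgeDisjoint Q ∧
      (∀ i, IsPathFrom E (Q i) (s i) (t i)) ∧
      (∀ i, pathEdges (Q i) = innerEdges (pathEdges (P i))) := by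
  rcases Nat.eq_zero_or_pos k with rfl | hk
  · exact ⟨finZeroElim, fun _ => [], finZeroElim, finZeroElim, finZeroElim⟩
  have hV : 0 < Fintype.card V := Fintype.card_pos_iff.mpr ⟨s ⟨0, hk⟩⟩
  have hkn : 0 < k * Fintype.card V := Nat.mul_pos hk hV
  have hd : ∀ v, outdeg E v = 0 → ∃ j, t j = v := fun v => (hac.dests v).mp
  choose q σ hq hPq using fun i =>
    (hP i).elim fun _ hz => exists_eq_routePath hd hkn hz.2 hz.1
  choose r hr hRr using fun i => exists_eq_routePath_self hd hkn (hR i) (ht' i)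
  have hweight : ∀ i, listWeight (w i) (P i) ≤
      Fintype.card V + if σ i = i then k * Fintype.card V else 0 := fun i => by
    obtain ⟨z, -, hPz⟩ := hP i
    rw [hPq i] at hPz ⊢
    exact listWeight_routePath_le hPz.1.2.1 (hr i).1.2.1 (hRr i ▸ hw i)
  have hσ : ∀ i, σ i = i :=
    (injective_of_edgeDisjoint hkn hPdisj (fun i => (hq i).2.2) hPq).eq_self_of_card_le
      (card_le_card_filter_add_one hV (by simpa using hweight) (by simpa using hcost))
  have hQ : ∀ i, IsPathFrom E (q i) (s i) (t i) := fun i => by simpa only [hσ i] using hq i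
  have hinner : ∀ i, pathEdges (q i) = innerEdges (pathEdges (P i)) := fun i => by
    rw [hPq i, innerEdges_pathEdges_routePath]
  refine ⟨fun i => ⟨?_, ?_, ?_⟩, q, hPdisj.of_innerEdges hinner, hQ, hinner⟩
  · rw [hPq i, hσ i]
    exact getLast?_routePath i _ (ht' i)
  · rw [hPq i]
    exact inl_mem_routePath i _ (List.mem_of_mem_head? (hQ i).2.1)
  · rw [hPq i]
    exact inl_mem_routePath i _ (List.mem_of_mem_getLast? (hQ i).2.2)

/-- In the tail-construction graph `G'` with indicator weights coming
from chosen paths `Rᵢ` from `sᵢ'` to `tᵢ'`: if `P₁, …, P_k` are pairwise edge-disjoint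
paths, `Pᵢ` starting at `sᵢ'` and ending at some vertex of outdegree 0, of total cost at
least `k² · |V|`, then each `Pᵢ` ends at `tᵢ'` and passes through `sᵢ` and `tᵢ`, and the
portions of the `Pᵢ` lying inside `G` form `k` pairwise edge-disjoint paths in `G`, the
`i`-th going from `sᵢ` to `tᵢ`. -/
theorem stmt8 {V : Type} [Fintype V] [DecidableEq V] (E : Finset (V × V)) (k : ℕ)
    (s t : Fin k → V) (hacyc : Acyclic E) (hac : AntConservation E k s t)
    (t' : Fin k → V ⊕ Fin k ⊕ Fin k × Fin (k * Fintype.card V))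
    (ht' : ∀ i, IsLastTail i (t' i))
    (R : Fin k → List (V ⊕ Fin k ⊕ Fin k × Fin (k * Fintype.card V)))
    (hR : ∀ i, IsPathFrom (tailEdges E s t) (R i) (Sum.inr (Sum.inl i)) (t' i))
    (w : Fin k → (V ⊕ Fin k ⊕ Fin k × Fin (k * Fintype.card V)) ×
                 (V ⊕ Fin k ⊕ Fin k × Fin (k * Fintype.card V)) → ℕ)
    (hw : ∀ i e, (e ∈ pathEdges (R i) → w i e = 1) ∧ (e ∉ pathEdges (R i) → w i e = 0))
    (P : Fin k → List (V ⊕ Fin k ⊕ Fin k × Fin (k * Fintype.card V)))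
    (hPdisj : EdgeDisjoint P)
    (hP : ∀ i, ∃ z, outdeg (tailEdges E s t) z = 0 ∧
      IsPathFrom (tailEdges E s t) (P i) (Sum.inr (Sum.inl i)) z)
    (hcost : k ^ 2 * Fintype.card V ≤ ∑ i, listWeight (w i) (P i)) :
    (∀ i, (P i).getLast? = some (t' i) ∧
      Sum.inl (s i) ∈ P i ∧ Sum.inl (t i) ∈ P i) ∧
    ∃ Q : Fin k → List V,
      EdgeDisjoint Q ∧
      (∀ i, IsPathFrom E (Q i) (s i) (t i)) ∧
      (∀ i, pathEdges (Q i) = innerEdges (pathEdges (P i))) :=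
  stmt8_general E k s t hac t' ht' R hR w hw P hPdisj hP hcost
end

section
/- Let (G, w) be an SCP instance and let x be an integral solution of the LP constraints (1)–(3). Then for each i, the set {e ∈ E : x_e^i = 1} is the edge set of a directed path in G from s_i to some destination; these k paths are pairwise edge-disjoint, together cover every edge of G, and form a feasible SCP solution whose cost equals the objective value Σ_e Σ_i w_e^i x_e^i of x. -/
/-- The LP constraints (1)–(3) of the SCP linear program on variables `x i e`:
(1) `Σᵢ x i e = 1` for every edge `e`; (2) flow conservation of each commodity `i` at
every intermediate vertex; (3) one unit of commodity `i` leaves the source `s i`. -/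
def LPFeasible {V : Type} [DecidableEq V] (E : Finset (V × V)) {k : ℕ}
    (s t : Fin k → V) (x : Fin k → V × V → ℚ) : Prop :=
  (∀ e ∈ E, ∑ i, x i e = 1) ∧
  (∀ v : V, (¬ ∃ i, s i = v) → (¬ ∃ i, t i = v) → ∀ i,
    ∑ e ∈ E.filter (fun e => e.2 = v), x i e = ∑ e ∈ E.filter (fun e => e.1 = v), x i e) ∧
  (∀ i, ∑ e ∈ E.filter (fun e => e.1 = s i), x i e = 1)

/-- The objective value `Σ_e Σ_i w i e * x i e` of the SCP linear program. -/
def LPObjective {V : Type} (E : Finset (V × V)) {k : ℕ}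
    (w : Fin k → V × V → ℕ) (x : Fin k → V × V → ℚ) : ℚ :=
  ∑ e ∈ E, ∑ i, (w i e : ℚ) * x i e


/-! Integrality and constraint (1) put every edge in exactly one of the sets
`F i = {e ∈ E | x i e = 1}`. Every source has outdegree one (outdegrees are positive by (3) and
sum to `k`), and its edge carries its own commodity; so in `F i` the vertex `s i` has one surplus
out-edge, and by (2) every other vertex has at least as many in-edges as out-edges. As the
excesses sum to zero, `F i` is a unit flow from `s i` to a single vertex, necessarily a
destination. In an acyclic graph a unit flow is a path: remove its first edge and recurse, until
what remains is balanced and hence empty, since a nonempty balanced graph contains a cycle. -/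

open Finset Relation

lemma Finset.exists_eq_one_of_sum_eq_one {ι R : Type*} [CommRing R] [LinearOrder R]
    [IsStrictOrderedRing R] {s : Finset ι} {f : ι → R} (hf : ∀ i ∈ s, f i = 0 ∨ 1 ≤ f i)
    (hs : ∑ i ∈ s, f i = 1) : ∃ d ∈ s, f d = 1 ∧ ∀ i ∈ s, i ≠ d → f i = 0 := by
  have hnn : ∀ i ∈ s, 0 ≤ f i := fun i hi => (hf i hi).elim (·.ge) zero_le_one.trans
  obtain ⟨d, hd, hfd⟩ := exists_ne_zero_of_sum_ne_zero (hs ▸ one_ne_zero : ∑ i ∈ s, f i ≠ 0)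
  have hd1 : 1 ≤ f d := (hf d hd).resolve_left hfd
  refine ⟨d, hd, le_antisymm (hs ▸ single_le_sum hnn hd) hd1, fun i hi hid => ?_⟩
  by_contra hi0
  have hi1 : 1 ≤ f i := (hf i hi).resolve_left hi0
  have := hs ▸ add_le_sum hnn hi hd hid
  linarith

section Paths

variable {V : Type}

lemma pathEdges_cons_cons_s11 (a b : V) (l : List V) :
    pathEdges (a :: b :: l) = (a, b) :: pathEdges (b :: l) := rfl

lemma nodup_pathEdges {p : List V} (hp : p.Nodup) : (pathEdges p).Nodup := by
  have hsnd : (pathEdges p).map Prod.snd = p.tail := List.map_snd_zip (by simp)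
  exact List.Nodup.of_map Prod.snd (hsnd ▸ hp.sublist p.tail_sublist)

lemma listWeight_eq_sum [DecidableEq V] (wt : V × V → ℕ) {p : List V} {S : Finset (V × V)}
    (hp : p.Nodup) (hS : ∀ e, e ∈ pathEdges p ↔ e ∈ S) : listWeight wt p = ∑ e ∈ S, wt e := by
  rw [listWeight, ← List.sum_toFinset _ (nodup_pathEdges hp)]
  congr
  ext e
  rw [List.mem_toFinset, hS]

end Paths

section Digraph

variable {V : Type} [DecidableEq V] {F G : Finset (V × V)}

lemma IsPathFrom.mono {p : List V} {a b : V} (hFG : F ⊆ G) (hp : IsPathFrom F p a b) :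
    IsPathFrom G p a b :=
  ⟨⟨hp.1.1, hp.1.2.1, hp.1.2.2.imp fun {_ _} h => hFG h⟩, hp.2⟩

lemma Acyclic.mono (hFG : F ⊆ G) (hG : Acyclic G) : Acyclic F :=
  fun p hp => hG p ⟨hp.1, hp.2.1.imp fun {_ _} h => hFG h, hp.2.2⟩

lemma Acyclic.not_transGen_self (hF : Acyclic F) (a : V) :
    ¬ TransGen (fun u v => (u, v) ∈ F) a a := by
  intro h
  obtain ⟨b, hab, hba⟩ := TransGen.head'_iff.1 h
  obtain ⟨l, hl, hlast⟩ := List.exists_isChain_cons_of_relationReflTransGen hba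
  refine hF (a :: b :: l) ⟨by simp, .cons_cons hab hl, ?_⟩
  rw [List.getLast?_cons_cons, List.getLast?_eq_some_getLast (List.cons_ne_nil _ _), hlast]
  rfl

lemma Acyclic.not_mem_of_isChain (hF : Acyclic F) {c b : V} {l : List V} (hcb : (c, b) ∈ F)
    (hl : (b :: l).IsChain fun u v => (u, v) ∈ F) : c ∉ b :: l := fun hc =>
  hF.not_transGen_self c <| TransGen.head' hcb <|
    hl.induction (ReflTransGen (fun u v => (u, v) ∈ F) b) _ (fun _ _ h hb => hb.tail h)
      (fun _ => ReflTransGen.refl) c hc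

lemma indeg_mono (h : F ⊆ G) (v : V) : indeg F v ≤ indeg G v :=
  card_le_card (filter_subset_filter _ h)

lemma outdeg_mono (h : F ⊆ G) (v : V) : outdeg F v ≤ outdeg G v :=
  card_le_card (filter_subset_filter _ h)

lemma sum_indeg [Fintype V] (F : Finset (V × V)) : ∑ v, indeg F v = F.card :=
  (card_eq_sum_card_fiberwise fun e _ => mem_univ e.2).symm

lemma sum_outdeg [Fintype V] (F : Finset (V × V)) : ∑ v, outdeg F v = F.card :=
  (card_eq_sum_card_fiberwise fun e _ => mem_univ e.1).symm

lemma indeg_erase_add {a b : V} (hab : (a, b) ∈ F) (v : V) :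
    indeg (F.erase (a, b)) v + (if v = b then 1 else 0) = indeg F v := by
  unfold indeg
  rw [filter_erase]
  split_ifs with hv
  · exact card_erase_add_one (mem_filter.2 ⟨hab, hv.symm⟩)
  · rw [erase_eq_of_notMem fun h => hv (mem_filter.1 h).2.symm, add_zero]

lemma outdeg_erase_add {a b : V} (hab : (a, b) ∈ F) (v : V) :
    outdeg (F.erase (a, b)) v + (if v = a then 1 else 0) = outdeg F v := by
  unfold outdeg
  rw [filter_erase]
  split_ifs with hv
  · exact card_erase_add_one (mem_filter.2 ⟨hab, hv.symm⟩)
  · rw [erase_eq_of_notMem fun h => hv (mem_filter.1 h).2.symm, add_zero]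

lemma exists_mem_of_outdeg_pos {v : V} (h : 0 < outdeg F v) : ∃ b, (v, b) ∈ F := by
  obtain ⟨⟨a, b⟩, he⟩ := card_pos.1 h
  obtain ⟨hab, rfl⟩ := mem_filter.1 he
  exact ⟨b, hab⟩

lemma indeg_pos_of_mem {a b : V} (h : (a, b) ∈ F) : 0 < indeg F b :=
  card_pos.2 ⟨(a, b), mem_filter.2 ⟨h, rfl⟩⟩

lemma Acyclic.eq_empty_of_indeg_le_outdeg [Finite V] (hF : Acyclic F)
    (h : ∀ v, indeg F v ≤ outdeg F v) : F = ∅ := by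
  by_contra hne
  obtain ⟨⟨a, b⟩, hab⟩ := nonempty_iff_ne_empty.2 hne
  -- a vertex with an in-edge from which no such vertex is reachable would have no out-edge
  let R : V → V → Prop := fun u v => TransGen (fun u v => (u, v) ∈ F) v u
  have : IsTrans V R := ⟨fun _ _ _ h₁ h₂ => h₂.trans h₁⟩
  have : Std.Irrefl R := ⟨hF.not_transGen_self⟩
  obtain ⟨m, hm, hmin⟩ := (Finite.wellFounded_of_trans_of_irrefl R).has_min
    {v | 0 < indeg F v} ⟨b, indeg_pos_of_mem hab⟩
  obtain ⟨u, hmu⟩ := exists_mem_of_outdeg_pos (lt_of_lt_of_le hm (h m))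
  exact hmin u (indeg_pos_of_mem hmu) (TransGen.single hmu)

/-- For `c = d` this says that `F` is balanced. -/
def IsUnitFlow (F : Finset (V × V)) (c d : V) : Prop :=
  ∀ v, indeg F v + (if v = c then 1 else 0) = outdeg F v + (if v = d then 1 else 0)

lemma IsUnitFlow.erase {c d b : V} (h : IsUnitFlow F c d) (hcb : (c, b) ∈ F) :
    IsUnitFlow (F.erase (c, b)) b d := by
  intro v
  have hin := indeg_erase_add hcb v
  have hout := outdeg_erase_add hcb v
  have hv := h v
  split_ifs at hin hout hv ⊢ <;> omega

lemma IsUnitFlow.exists_path [Fintype V] {c d : V} (hF : Acyclic F) (h : IsUnitFlow F c d) :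
    ∃ p, IsPathFrom F p c d ∧ ∀ e, e ∈ pathEdges p ↔ e ∈ F := by
  induction F using Finset.strongInduction generalizing c with | H F ih =>
  by_cases hcd : c = d
  · subst hcd
    have hempty : F = ∅ := hF.eq_empty_of_indeg_le_outdeg fun v => by have := h v; omega
    exact ⟨[c], ⟨⟨by simp, by simp, .singleton _⟩, rfl, rfl⟩, by simp [hempty, pathEdges]⟩
  obtain ⟨b, hcb⟩ : ∃ b, (c, b) ∈ F :=
    exists_mem_of_outdeg_pos (by have := h c; simp only [if_true, if_neg hcd] at this; omega)
  have hsub : F.erase (c, b) ⊆ F := erase_subset _ _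
  obtain ⟨p, ⟨⟨-, hnd, hch⟩, hhead, hlast⟩, hedges⟩ :=
    ih _ (erase_ssubset hcb) (hF.mono hsub) (h.erase hcb)
  obtain ⟨l, rfl⟩ : ∃ l, p = b :: l := by
    cases p with
    | nil => simp at hhead
    | cons a l => exact ⟨l, by simpa using hhead⟩
  have hchF : (b :: l).IsChain fun u v => (u, v) ∈ F := hch.imp fun {_ _} h => hsub h
  refine ⟨c :: b :: l, ⟨⟨by simp, ?_, .cons_cons hcb hchF⟩, rfl, ?_⟩, fun e => ?_⟩
  · exact List.nodup_cons.2 ⟨hF.not_mem_of_isChain hcb hchF, hnd⟩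
  · rwa [List.getLast?_cons_cons]
  · rw [pathEdges_cons_cons_s11, List.mem_cons, hedges, mem_erase]
    by_cases he : e = (c, b)
    · simp [he, hcb]
    · simp [he]

/-- The excesses `indeg v - outdeg v` sum to zero, so the surplus out-edge at `c` is absorbed by
exactly one vertex. -/
lemma exists_isUnitFlow [Fintype V] {c : V} (hc : outdeg F c = indeg F c + 1)
    (h : ∀ v, v ≠ c → outdeg F v ≤ indeg F v) : ∃ d, IsUnitFlow F c d := by
  set g : V → ℤ := fun v => indeg F v - outdeg F v
  have htotal : ∑ v, g v = 0 := by
    simp only [g, sum_sub_distrib, ← Nat.cast_sum, sum_indeg, sum_outdeg, sub_self]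
  have hrest : ∑ v ∈ univ.erase c, g v = 1 := by
    have := add_sum_erase univ g (mem_univ c)
    simp only [g] at this htotal ⊢
    omega
  obtain ⟨d, hd, hgd, hg⟩ := exists_eq_one_of_sum_eq_one
    (fun v hv => by have := h v (ne_of_mem_erase hv); simp only [g]; omega) hrest
  refine ⟨d, fun v => ?_⟩
  by_cases hvc : v = c
  · subst hvc
    simp [(ne_of_mem_erase hd).symm, hc]
  by_cases hvd : v = d
  · subst hvd
    simp only [g] at hgd
    simp only [if_neg hvc, if_true]
    omega
  · have := hg v (mem_erase.2 ⟨hvc, mem_univ v⟩) hvd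
    simp only [g] at this
    simp only [if_neg hvc, if_neg hvd]
    omega

end Digraph

lemma card_filter_eq_one_eq_sum {α : Type*} {S : Finset α} {y : α → ℚ}
    (hy : ∀ e ∈ S, y e = 0 ∨ y e = 1) : ((S.filter (y · = 1)).card : ℚ) = ∑ e ∈ S, y e := by
  rw [← sum_boole]
  refine sum_congr rfl fun e he => ?_
  rcases hy e he with h | h <;> simp [h]

lemma LPObjective_eq_sum {V : Type} {E : Finset (V × V)} {k : ℕ} (w : Fin k → V × V → ℕ)
    {x : Fin k → V × V → ℚ} (hint : ∀ i, ∀ e ∈ E, x i e = 0 ∨ x i e = 1) :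
    LPObjective E w x = ∑ i, ∑ e ∈ E.filter (x i · = 1), (w i e : ℚ) := by
  rw [LPObjective, sum_comm]
  refine sum_congr rfl fun i _ => ?_
  rw [sum_filter]
  refine sum_congr rfl fun e he => ?_
  rcases hint i e he with h | h <;> simp [h]

section LP

variable {V : Type} [DecidableEq V] {E : Finset (V × V)} {k : ℕ} {s t : Fin k → V}
  {x : Fin k → V × V → ℚ}

lemma indeg_filter_eq_sum {y : V × V → ℚ} (hy : ∀ e ∈ E, y e = 0 ∨ y e = 1) (v : V) :
    (indeg (E.filter (y · = 1)) v : ℚ) = ∑ e ∈ E.filter (·.2 = v), y e := by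
  rw [indeg, filter_comm, card_filter_eq_one_eq_sum fun e he => hy e (mem_filter.1 he).1]

lemma outdeg_filter_eq_sum {y : V × V → ℚ} (hy : ∀ e ∈ E, y e = 0 ∨ y e = 1) (v : V) :
    (outdeg (E.filter (y · = 1)) v : ℚ) = ∑ e ∈ E.filter (·.1 = v), y e := by
  rw [outdeg, filter_comm, card_filter_eq_one_eq_sum fun e he => hy e (mem_filter.1 he).1]

lemma LPFeasible.existsUnique_eq_one (hx : LPFeasible E s t x)
    (hint : ∀ i, ∀ e ∈ E, x i e = 0 ∨ x i e = 1) {e : V × V} (he : e ∈ E) :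
    ∃! i, x i e = 1 := by
  obtain ⟨d, -, hd, hzero⟩ := exists_eq_one_of_sum_eq_one
    (fun i _ => (hint i e he).imp_right (·.ge)) (hx.1 e he)
  refine ⟨d, hd, fun i hi => by_contra fun hid => ?_⟩
  simp [hzero i (mem_univ i) hid] at hi

lemma LPFeasible.outdeg_source (hac : AntConservation E k s t) (hx : LPFeasible E s t x)
    (j : Fin k) : outdeg E (s j) = 1 := by
  have hpos : ∀ m, 1 ≤ outdeg E (s m) := fun m => Nat.one_le_iff_ne_zero.2 fun h0 => by
    have := hx.2.2 m
    rw [card_eq_zero.1 h0, sum_empty] at this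
    exact zero_ne_one this
  exact ((sum_eq_sum_iff_of_le fun m _ => hpos m).1 (by simp [hac.out_sum]) j (mem_univ j)).symm

lemma LPFeasible.outdeg_filter_source_of_ne (hac : AntConservation E k s t)
    (hx : LPFeasible E s t x) (hint : ∀ i, ∀ e ∈ E, x i e = 0 ∨ x i e = 1) {i j : Fin k}
    (hij : i ≠ j) : outdeg (E.filter (x i · = 1)) (s j) = 0 := by
  obtain ⟨e, he⟩ := card_eq_one.1 (hx.outdeg_source hac j)
  have heE : e ∈ E := (mem_filter.1 (he ▸ mem_singleton_self e)).1
  have hje : x j e = 1 := by simpa [he] using hx.2.2 j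
  have hie : x i e = 0 :=
    (hint i e heE).resolve_right fun hie => hij ((hx.existsUnique_eq_one hint heE).unique hie hje)
  have : (outdeg (E.filter (x i · = 1)) (s j) : ℚ) = 0 := by
    rw [outdeg_filter_eq_sum (hint i), he, sum_singleton, hie]
  exact_mod_cast this

lemma LPFeasible.indeg_filter_eq_outdeg (hx : LPFeasible E s t x)
    (hint : ∀ i, ∀ e ∈ E, x i e = 0 ∨ x i e = 1) {v : V} (hs : ¬ ∃ j, s j = v)
    (ht : ¬ ∃ j, t j = v) (i : Fin k) :
    indeg (E.filter (x i · = 1)) v = outdeg (E.filter (x i · = 1)) v := by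
  have := hx.2.1 v hs ht i
  rw [← indeg_filter_eq_sum (hint i), ← outdeg_filter_eq_sum (hint i)] at this
  exact_mod_cast this

lemma LPFeasible.outdeg_filter_le_indeg (hac : AntConservation E k s t) (hx : LPFeasible E s t x)
    (hint : ∀ i, ∀ e ∈ E, x i e = 0 ∨ x i e = 1) {i : Fin k} {v : V} (hv : v ≠ s i) :
    outdeg (E.filter (x i · = 1)) v ≤ indeg (E.filter (x i · = 1)) v := by
  by_cases hs : ∃ j, s j = v
  · obtain ⟨j, rfl⟩ := hs
    rw [hx.outdeg_filter_source_of_ne hac hint fun h => hv (congrArg s h.symm)]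
    exact Nat.zero_le _
  by_cases ht : ∃ j, t j = v
  · obtain ⟨j, rfl⟩ := ht
    rw [Nat.eq_zero_of_le_zero <|
      (outdeg_mono (filter_subset _ _) _).trans ((hac.dests _).2 ⟨j, rfl⟩).le]
    exact Nat.zero_le _
  exact (hx.indeg_filter_eq_outdeg hint hs ht i).ge

lemma LPFeasible.exists_path [Fintype V] (hacyc : Acyclic E) (hac : AntConservation E k s t)
    (hx : LPFeasible E s t x) (hint : ∀ i, ∀ e ∈ E, x i e = 0 ∨ x i e = 1) (i : Fin k) :
    ∃ p j, IsPathFrom E p (s i) (t j) ∧ ∀ e, e ∈ pathEdges p ↔ e ∈ E ∧ x i e = 1 := by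
  set F := E.filter (x i · = 1)
  have hFE : F ⊆ E := filter_subset _ _
  have hin_src : ∀ j, indeg F (s j) = 0 := fun j =>
    Nat.eq_zero_of_le_zero <| (indeg_mono hFE _).trans ((hac.sources _).2 ⟨j, rfl⟩).le
  have hout_src : outdeg F (s i) = 1 := by
    exact_mod_cast (outdeg_filter_eq_sum (hint i) (s i)).trans (hx.2.2 i)
  obtain ⟨d, hd⟩ : ∃ d, IsUnitFlow F (s i) d :=
    exists_isUnitFlow (by rw [hout_src, hin_src]) fun _ hv =>
      hx.outdeg_filter_le_indeg hac hint hv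
  obtain ⟨p, hp, hedges⟩ := hd.exists_path (hacyc.mono hFE)
  have hds : d ≠ s i := by
    rintro rfl
    have := hd (s i)
    simp only [if_true, hout_src, hin_src] at this
    omega
  have hdt : ∃ j, t j = d := by
    have hflow := hd d
    simp only [if_neg hds, if_true, add_zero] at hflow
    by_contra ht
    have hs : ¬ ∃ j, s j = d := by
      rintro ⟨j, rfl⟩
      simp [hin_src] at hflow
    have hbal : indeg F d = outdeg F d := hx.indeg_filter_eq_outdeg hint hs ht i
    omega
  obtain ⟨j, rfl⟩ := hdt
  exact ⟨p, j, hp.mono hFE, fun e => (hedges e).trans mem_filter⟩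

end LP

/-- Given an SCP instance and an integral solution `x` of the LP
constraints (1)–(3), for each `i` the set `{e ∈ E : x i e = 1}` is the edge set of a
directed path in `G` from `s i` to some destination; these `k` paths are pairwise
edge-disjoint, together cover every edge of `G`, and form a feasible SCP solution
whose cost equals the objective value of `x`. -/
theorem stmt11 {V : Type} [Fintype V] [DecidableEq V] (E : Finset (V × V)) (k : ℕ)
    (s t : Fin k → V) (hacyc : Acyclic E) (hac : AntConservation E k s t)
    (w : Fin k → V × V → ℕ)
    (x : Fin k → V × V → ℚ)
    (hx : LPFeasible E s t x)
    (hint : ∀ i, ∀ e ∈ E, x i e = 0 ∨ x i e = 1) :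
    ∃ P : Fin k → List V,
      (∀ i, ∃ j, IsPathFrom E (P i) (s i) (t j)) ∧
      (∀ i e, e ∈ pathEdges (P i) ↔ e ∈ E ∧ x i e = 1) ∧
      EdgeDisjoint P ∧
      (∀ e ∈ E, ∃ i, e ∈ pathEdges (P i)) ∧
      (∑ i, listWeight (w i) (P i) : ℕ) = LPObjective E w x := by
  choose P j hP hedges using hx.exists_path hacyc hac hint
  refine ⟨P, fun i => ⟨j i, hP i⟩, hedges, ?_, ?_, ?_⟩
  · intro i i' hii' e hi hi'
    rw [hedges] at hi hi'
    exact hii' ((hx.existsUnique_eq_one hint hi.1).unique hi.2 hi'.2)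
  · intro e he
    obtain ⟨i, hi, -⟩ := hx.existsUnique_eq_one hint he
    exact ⟨i, (hedges i e).2 ⟨he, hi⟩⟩
  · rw [LPObjective_eq_sum w hint, Nat.cast_sum]
    refine sum_congr rfl fun i _ => ?_
    rw [listWeight_eq_sum (w i) (S := E.filter (x i · = 1)) (hP i).1.2.1
        fun e => by rw [hedges, mem_filter], Nat.cast_sum]
end
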